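/- arXiv:2007.14752 — 2 statements merged into one kernel-verified Lean document; each statement's English description precedes it below -/
import Mathlib

section
/- Let n | q + 1 with gcd(n, q) = 1, so the order of q modulo n is 2 and the n-th roots of unity lie in F_{q^2}. Let δ be even, b coprime to n, and α a primitive n-th root of unity in F_{q^2}. Let A = {α^t, α^{t+b}, ..., α^{t+(m-1)b}} ∪ {α^{t+i_1 b}, ..., α^{t+i_s b}} with m-1+δ ≤ i_1 < ... < i_s ≤ n - δ and gaps i_{ℓ+1} - i_ℓ ≥ δ, and B = {α^0, α^{±b}, α^{±2b}, ..., α^{±(δ-2)b/2}}. If the exponent set {0 ≤ j ≤ n-1 : α^j ∈ AB} is a union of q-cyclotomic cosets modulo n, then the cyclic code C_{AB} of length n over F_q with complete defining set AB is a cyclic (d_A⊥ - δ + 1, δ)-LRC over F_q with dimension k = n - m + 1 - (s+1)(δ-1); and if ⌈k/r⌉ = s+1 with r = d_A⊥ - δ + 1, then C_{AB} is optimal with minimum distance m + δ - 1. -/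
noncomputable section

open Polynomial
open scoped Pointwise

/-- The cyclic code of length `n` over `K` whose complete defining set is `Z ⊆ L`,
where `L` is an extension of `K` containing the `n`-th roots of unity:
codewords are those `c` whose associated polynomial vanishes on `Z`. -/
def cyclicCodeOn (K L : Type) [Field K] [Field L] [Algebra K L]
    (n : ℕ) (Z : Set L) : Submodule K (Fin n → K) where
  carrier := {c | ∀ β ∈ Z, ∑ i : Fin n, algebraMap K L (c i) * β ^ (i : ℕ) = 0}
  add_mem' := by
    intro a b ha hb β hβ
    simp only [Pi.add_apply, map_add, add_mul, Finset.sum_add_distrib]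
    rw [ha β hβ, hb β hβ, add_zero]
  zero_mem' := by intro β hβ; simp
  smul_mem' := by
    intro r a ha β hβ
    simp only [Pi.smul_apply, smul_eq_mul, map_mul, mul_assoc, ← Finset.mul_sum]
    rw [ha β hβ, mul_zero]

/-- Cyclic code of length `n` over `F` with complete defining set `Z ⊆ F`. -/
abbrev cyclicCode (F : Type) [Field F] (n : ℕ) (Z : Set F) : Submodule F (Fin n → F) :=
  cyclicCodeOn F F n Z

/-- The dual code of a code `C ⊆ F^n` (under the standard inner product). -/
def dualSet (F : Type) [Field F] (n : ℕ) (C : Set (Fin n → F)) : Set (Fin n → F) :=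
  {v | ∀ c ∈ C, ∑ i : Fin n, v i * c i = 0}

open Classical in
/-- Hamming weight of a vector. -/
def wt {F : Type} [Zero F] {n : ℕ} (c : Fin n → F) : ℕ :=
  (Finset.univ.filter (fun i => c i ≠ 0)).card

/-- `d` is the minimum Hamming distance (= minimum nonzero weight) of the code `C`. -/
def IsMinDist {F : Type} [Zero F] {n : ℕ} (C : Set (Fin n → F)) (d : ℕ) : Prop :=
  (∃ c ∈ C, c ≠ 0 ∧ wt c = d) ∧ ∀ c ∈ C, c ≠ 0 → d ≤ wt c

open Classical in
/-- `C` has `(r, δ)`-locality: every coordinate lies in a recovery set `S` of size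
at most `r + δ - 1` such that the punctured code `C|_S` has minimum distance `≥ δ`. -/
def HasLocality {F : Type} [Zero F] {n : ℕ} (C : Set (Fin n → F)) (r δ : ℕ) : Prop :=
  ∀ i : Fin n, ∃ S : Finset (Fin n), i ∈ S ∧ S.card ≤ r + δ - 1 ∧
    ∀ c ∈ C, ∀ c' ∈ C, (∃ j ∈ S, c j ≠ c' j) →
      δ ≤ (S.filter (fun j => c j ≠ c' j)).card

/-- The polynomial `c₀ + c₁ x + ⋯ + c_{n-1} x^{n-1}` associated to a vector. -/
def vecPoly {F : Type} [Semiring F] {n : ℕ} (c : Fin n → F) : Polynomial F :=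
  ∑ i : Fin n, Polynomial.C (c i) * Polynomial.X ^ (i : ℕ)

/-- The cyclic code of length `n` generated by `g(x)` (a divisor of `x^n - 1`). -/
def codeOfGen (F : Type) [Field F] (n : ℕ) (g : Polynomial F) : Set (Fin n → F) :=
  {c | g ∣ vecPoly c}

/-- Ceiling division `⌈a / b⌉` on naturals. -/
def ceilDiv' (a b : ℕ) : ℕ := (a + b - 1) / b

/-- The code parameters meet the Singleton-like bound for `(r, δ)`-LRCs:
`d = n - k - (⌈k/r⌉ - 1)(δ - 1) + 1`. -/
def SingletonOpt (n k r δ d : ℕ) : Prop :=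
  d = n - k - (ceilDiv' k r - 1) * (δ - 1) + 1


set_option linter.unusedSectionVars false

noncomputable section
open Polynomial

lemma powModCast {F : Type*} [Monoid F] {β : F} {n : ℕ} (hβ : β ^ n = 1) (a : ℕ) :
    β ^ (a % n) = β ^ a := by
  conv_rhs => rw [← Nat.div_add_mod a n]
  rw [pow_add, pow_mul, hβ, one_pow, one_mul]

lemma powModEq {F : Type*} [Monoid F] {β : F} {n : ℕ} (hβ : β ^ n = 1) {a b : ℕ}
    (h : a ≡ b [MOD n]) : β ^ a = β ^ b := by
  rw [← powModCast hβ a, ← powModCast hβ b, h]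

/-- `α ^ e` for `e : ZMod n`. -/
def rootPow {L : Type*} [Monoid L] {n : ℕ} (α : L) (e : ZMod n) : L := α ^ e.val

section rootPow
variable {L : Type*} [Field L] {n : ℕ} [NeZero n] {α : L} (hα : IsPrimitiveRoot α n)

include hα

lemma rootPow_natCast (a : ℕ) : rootPow α (a : ZMod n) = α ^ a := by
  rw [rootPow, ZMod.val_natCast]
  exact powModCast hα.pow_eq_one a

lemma rootPow_add (u v : ZMod n) : rootPow α (u + v) = rootPow α u * rootPow α v := by
  rw [rootPow, rootPow, rootPow, ZMod.val_add, ← pow_add]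
  exact powModCast hα.pow_eq_one _

lemma rootPow_zero' : rootPow α (0 : ZMod n) = 1 := by
  rw [rootPow]; simp

lemma rootPow_ne_zero (u : ZMod n) : rootPow α u ≠ 0 := by
  have : α ≠ 0 := by
    intro h
    have := hα.pow_eq_one
    rw [h, zero_pow (NeZero.ne n)] at this
    exact zero_ne_one this
  exact pow_ne_zero _ this

lemma rootPow_neg (u : ZMod n) : rootPow α (-u) = (rootPow α u)⁻¹ := by
  have h1 : rootPow α (-u) * rootPow α u = 1 := by
    rw [← rootPow_add hα, neg_add_cancel, rootPow_zero' hα]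
  exact (eq_inv_of_mul_eq_one_left h1)

lemma rootPow_pow (u : ZMod n) (c : ℕ) : (rootPow α u) ^ c = rootPow α ((c : ZMod n) * u) := by
  induction c with
  | zero => simp [rootPow_zero' hα]
  | succ k ih =>
    rw [pow_succ, ih, Nat.cast_add, Nat.cast_one, add_mul, one_mul, rootPow_add hα]

lemma rootPow_inj : Function.Injective (rootPow (n := n) α) := by
  intro u v h
  have := hα.pow_inj (ZMod.val_lt u) (ZMod.val_lt v) h
  have h2 : ((u.val : ℕ) : ZMod n) = ((v.val : ℕ) : ZMod n) := by rw [this]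
  rwa [ZMod.natCast_val, ZMod.natCast_val, ZMod.cast_id, ZMod.cast_id] at h2

end rootPow

/-- Vandermonde-type vanishing lemma. -/
lemma vdm_zero {F : Type*} [Field F] {ι : Type*} [DecidableEq ι] (T : Finset ι)
    (y d : ι → F) (hy : Set.InjOn y T) {N : ℕ} (hT : T.card ≤ N)
    (h : ∀ j < N, ∑ i ∈ T, d i * y i ^ j = 0) : ∀ i ∈ T, d i = 0 := by
  intro i0 hi0
  set Q : F[X] := ∏ i ∈ T.erase i0, (X - C (y i)) with hQ
  have hdeg : Q.natDegree < N := by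
    have h1 : Q.natDegree = (T.erase i0).card := by
      rw [hQ, Polynomial.natDegree_prod _ _ (fun i _ => X_sub_C_ne_zero (y i))]
      simp
    rw [h1, Finset.card_erase_of_mem hi0]
    have : 1 ≤ T.card := Finset.card_pos.mpr ⟨i0, hi0⟩
    omega
  have key : ∑ i ∈ T, d i * Q.eval (y i) = 0 := by
    have h2 : ∀ i ∈ T, d i * Q.eval (y i)
        = ∑ j ∈ Finset.range N, Q.coeff j * (d i * y i ^ j) := by
      intro i _
      rw [Polynomial.eval_eq_sum_range' hdeg, Finset.mul_sum]
      exact Finset.sum_congr rfl fun j _ => by ring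
    rw [Finset.sum_congr rfl h2, Finset.sum_comm]
    apply Finset.sum_eq_zero
    intro j hj
    rw [← Finset.mul_sum, h j (Finset.mem_range.mp hj), mul_zero]
  have hvanish : ∀ i ∈ T, i ≠ i0 → d i * Q.eval (y i) = 0 := by
    intro i hi hne
    have : Q.eval (y i) = 0 := by
      rw [hQ, Polynomial.eval_prod]
      exact Finset.prod_eq_zero (Finset.mem_erase.mpr ⟨hne, hi⟩) (by simp)
    rw [this, mul_zero]
  rw [Finset.sum_eq_single_of_mem i0 hi0 hvanish] at key
  have hQne : Q.eval (y i0) ≠ 0 := by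
    rw [hQ, Polynomial.eval_prod]
    apply Finset.prod_ne_zero_iff.mpr
    intro i hi
    simp only [Polynomial.eval_sub, Polynomial.eval_X, Polynomial.eval_C, sub_ne_zero]
    intro hcontra
    exact (Finset.mem_erase.mp hi).1 (hy (Finset.mem_of_mem_erase hi) hi0 hcontra.symm)
  exact (mul_eq_zero.mp key).resolve_right hQne

set_option linter.unusedSectionVars false
noncomputable section
open Polynomial

/-- exponent map into `ZMod n`. -/
def fexp (n b t h : ℕ) (x : ℕ) : ZMod n :=
  (t : ZMod n) + (b : ZMod n) * ((x : ZMod n) - (h : ZMod n))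

/-- the (shifted by `h`) exponent multiset. -/
def expD (m s h : ℕ) (idx : Fin s → ℕ) : Finset ℕ :=
  Finset.range (m + 2*h) ∪
    Finset.univ.biUnion (fun l : Fin s => Finset.Ico (idx l) (idx l + 2*h + 1))

section Exp
variable {L : Type} [Field L] {n m s b t δ h : ℕ} {α : L} {idx : Fin s → ℕ}

lemma idx_chain (hgap : ∀ l : Fin s, ∀ hl : (l : ℕ) + 1 < s, idx l + δ ≤ idx ⟨(l : ℕ) + 1, hl⟩) :
    ∀ (c a : ℕ) (ha : a < s) (hc : c < s), a < c → idx ⟨a, ha⟩ + (c - a) * δ ≤ idx ⟨c, hc⟩ := by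
  intro c
  induction c with
  | zero => omega
  | succ k ih =>
    intro a ha hc hak
    have hk : k < s := by omega
    have hstep : idx ⟨k, hk⟩ + δ ≤ idx ⟨k+1, hc⟩ := hgap ⟨k, hk⟩ hc
    rcases Nat.lt_or_ge a k with hlt | hge
    · have := ih a ha hk hlt
      have hsub : (k + 1 - a) * δ = (k - a) * δ + δ := by
        have : k + 1 - a = (k - a) + 1 := by omega
        rw [this]; ring
      omega
    · have : a = k := by omega
      subst this
      simpa using hstep

variable [NeZero n] (hα : IsPrimitiveRoot α n)

include hα

lemma id_plus (j e : ℕ) :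
    α ^ (t + j*b) * α ^ (e*b) = rootPow α (fexp n b t h (j + h + e)) := by
  have h1 : fexp n b t h (j + h + e) = ((t + b*(j+e) : ℕ) : ZMod n) := by
    unfold fexp; push_cast; ring
  rw [h1, rootPow_natCast hα]
  have h2 : t + b*(j+e) = (t + j*b) + e*b := by ring
  rw [h2]; ring

lemma id_minus (j e : ℕ) (he : e ≤ h) :
    α ^ (t + j*b) * (α ^ (e*b))⁻¹ = rootPow α (fexp n b t h (j + h - e)) := by
  have hc : ((j + h - e : ℕ) : ZMod n) = (j : ZMod n) + (h : ZMod n) - (e : ZMod n) := by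
    have : e ≤ j + h := by omega
    push_cast [Nat.cast_sub this]
    ring
  have h1 : fexp n b t h (j + h - e)
      = ((t + j*b : ℕ) : ZMod n) + (-((e*b : ℕ) : ZMod n)) := by
    unfold fexp; rw [hc]; push_cast; ring
  rw [h1, rootPow_add hα, rootPow_neg hα, rootPow_natCast hα, rootPow_natCast hα]

omit hα in
lemma fexp_injOn (hb : Nat.Coprime b n) {D : Finset ℕ} (hlt : ∀ x ∈ D, x < n) :
    Set.InjOn (fexp n b t h) ↑D := by
  intro x hx y hy hxy
  unfold fexp at hxy
  have hbu : IsUnit (b : ZMod n) := (ZMod.isUnit_iff_coprime b n).mpr hb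
  have h2 : (x : ZMod n) = (y : ZMod n) := by
    have := add_left_cancel hxy
    have := hbu.mul_left_cancel this
    linear_combination this
  have h3 : x ≡ y [MOD n] := (ZMod.natCast_eq_natCast_iff _ _ _).mp h2
  have hxn := hlt x hx
  have hyn := hlt y hy
  have h4 : x % n = y % n := h3
  rwa [Nat.mod_eq_of_lt hxn, Nat.mod_eq_of_lt hyn] at h4

omit hα in
lemma expD_card
    (hlow' : ∀ l : Fin s, m + 2*h + 1 ≤ idx l)
    (hchain : ∀ (l l' : Fin s), (l : ℕ) < (l' : ℕ) → idx l + (2*h+2) ≤ idx l') :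
    (expD m s h idx).card = m + 2*h + s*(2*h+1) := by
  classical
  unfold expD
  rw [Finset.card_union_of_disjoint, Finset.card_biUnion]
  · have h1 : ∀ l : Fin s, (Finset.Ico (idx l) (idx l + 2*h + 1)).card = 2*h+1 := by
      intro l; rw [Nat.card_Ico]; omega
    rw [Finset.card_range, Finset.sum_congr rfl (fun l _ => h1 l), Finset.sum_const,
      Finset.card_univ, Fintype.card_fin, smul_eq_mul]
  · intro l _ l' _ hne
    rw [Function.onFun, Finset.disjoint_left]
    intro x hxl hxl'
    simp only [Finset.mem_Ico] at hxl hxl'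
    rcases Nat.lt_or_ge (l : ℕ) (l' : ℕ) with hll | hll
    · have := hchain l l' hll; omega
    · have hne' : (l' : ℕ) < (l : ℕ) := by
        rcases Nat.lt_or_ge (l' : ℕ) (l : ℕ) with h' | h'
        · exact h'
        · exact absurd (Fin.ext (by omega)) hne
      have := hchain l' l hne'; omega
  · rw [Finset.disjoint_left]
    intro x hx hx'
    simp only [Finset.mem_range] at hx
    simp only [Finset.mem_biUnion, Finset.mem_Ico] at hx'
    obtain ⟨l, _, hl, _⟩ := hx'
    have := hlow' l
    omega

end Exp

set_option linter.unusedSectionVars false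
noncomputable section
open Polynomial
open scoped Pointwise

section ABEq
variable {L : Type} [Field L] {n m s b t δ h : ℕ} {α : L} {idx : Fin s → ℕ} [NeZero n]

lemma mem_expD_left {x : ℕ} (hx : x < m + 2*h) : x ∈ expD m s h idx :=
  Finset.mem_union.mpr (Or.inl (Finset.mem_range.mpr hx))

lemma mem_expD_right {x : ℕ} (l : Fin s) (h1 : idx l ≤ x) (h2 : x < idx l + 2*h + 1) :
    x ∈ expD m s h idx :=
  Finset.mem_union.mpr (Or.inr (Finset.mem_biUnion.mpr
    ⟨l, Finset.mem_univ l, Finset.mem_Ico.mpr ⟨h1, h2⟩⟩))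

lemma AB_eq (hα : IsPrimitiveRoot α n) (hm : 0 < m) (hδh : δ = 2*h + 2)
    (A B : Set L)
    (hAdef : A = {x : L | ∃ j < m, x = α ^ (t + j * b)} ∪
      {x : L | ∃ l : Fin s, x = α ^ (t + idx l * b)})
    (hBdef : B = {x : L | ∃ e ≤ (δ - 2) / 2, x = α ^ (e * b) ∨ x = (α ^ (e * b))⁻¹}) :
    A * B = rootPow α '' (fexp n b t h '' ↑(expD m s h idx)) := by
  have hhalf : (δ - 2) / 2 = h := by omega
  ext x
  constructor
  · rintro ⟨a, ha, b', hb', rfl⟩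
    dsimp only
    rw [hAdef] at ha
    rw [hBdef] at hb'
    obtain ⟨e, he, hbe⟩ := hb'
    rw [hhalf] at he
    have mk : ∀ x0 : ℕ, x0 ∈ expD m s h idx →
        rootPow α (fexp n b t h x0) ∈ rootPow α '' (fexp n b t h '' ↑(expD m s h idx)) :=
      fun x0 hx0 => ⟨_, ⟨x0, Finset.mem_coe.mpr hx0, rfl⟩, rfl⟩
    rcases ha with hA1 | hA2
    · obtain ⟨j, hj, rfl⟩ := hA1
      rcases hbe with rfl | rfl
      · rw [id_plus hα j e]
        exact mk _ (mem_expD_left (by omega))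
      · rw [id_minus hα j e he]
        exact mk _ (mem_expD_left (by omega))
    · obtain ⟨l, rfl⟩ := hA2
      rcases hbe with rfl | rfl
      · rw [id_plus hα (idx l) e]
        exact mk _ (mem_expD_right l (by omega) (by omega))
      · rw [id_minus hα (idx l) e he]
        exact mk _ (mem_expD_right l (by omega) (by omega))
  · rintro ⟨y, ⟨x', hx', rfl⟩, rfl⟩
    have hx'' := Finset.mem_coe.mp hx'
    have memA1 : ∀ j : ℕ, j < m → α ^ (t + j * b) ∈ A := by
      intro j hj; rw [hAdef]; left; exact ⟨j, hj, rfl⟩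
    have memA2 : ∀ l : Fin s, α ^ (t + idx l * b) ∈ A := by
      intro l; rw [hAdef]; right; exact ⟨l, rfl⟩
    have memB1 : ∀ e : ℕ, e ≤ h → α ^ (e * b) ∈ B := by
      intro e he; rw [hBdef]; exact ⟨e, by omega, Or.inl rfl⟩
    have memB2 : ∀ e : ℕ, e ≤ h → (α ^ (e * b))⁻¹ ∈ B := by
      intro e he; rw [hBdef]; exact ⟨e, by omega, Or.inr rfl⟩
    rcases Finset.mem_union.mp hx'' with hr | hb'
    · have hxr := Finset.mem_range.mp hr
      rcases Nat.lt_or_ge x' h with hc1 | hc1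
      · -- x' < h : j = 0, minus, e = h - x'
        have heq : 0 + h - (h - x') = x' := by omega
        have := id_minus (t := t) (b := b) (h := h) hα 0 (h - x') (by omega)
        rw [heq] at this
        rw [← this]
        exact Set.mul_mem_mul (memA1 0 hm) (memB2 (h - x') (by omega))
      · rcases Nat.lt_or_ge x' (m + h) with hc2 | hc2
        · -- j = x' - h, plus, e = 0
          have heq : (x' - h) + h + 0 = x' := by omega
          have := id_plus (t := t) (b := b) (h := h) hα (x' - h) 0
          rw [heq] at this
          rw [← this]
          exact Set.mul_mem_mul (memA1 (x' - h) (by omega)) (memB1 0 (by omega))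
        · -- j = m - 1, plus, e = x' - h - (m-1)
          have heq : (m - 1) + h + (x' - h - (m - 1)) = x' := by omega
          have := id_plus (t := t) (b := b) (h := h) hα (m - 1) (x' - h - (m - 1))
          rw [heq] at this
          rw [← this]
          exact Set.mul_mem_mul (memA1 (m - 1) (by omega)) (memB1 (x' - h - (m - 1)) (by omega))
    · obtain ⟨l, _, hl⟩ := Finset.mem_biUnion.mp hb'
      have hlo := (Finset.mem_Ico.mp hl).1
      have hhi := (Finset.mem_Ico.mp hl).2
      rcases Nat.lt_or_ge x' (idx l + h) with hc1 | hc1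
      · -- minus, e = idx l + h - x'
        have heq : idx l + h - (idx l + h - x') = x' := by omega
        have := id_minus (t := t) (b := b) (h := h) hα (idx l) (idx l + h - x') (by omega)
        rw [heq] at this
        rw [← this]
        exact Set.mul_mem_mul (memA2 l) (memB2 (idx l + h - x') (by omega))
      · -- plus, e = x' - idx l - h
        have heq : idx l + h + (x' - idx l - h) = x' := by omega
        have := id_plus (t := t) (b := b) (h := h) hα (idx l) (x' - idx l - h)
        rw [heq] at this
        rw [← this]
        exact Set.mul_mem_mul (memA2 l) (memB1 (x' - idx l - h) (by omega))

end ABEq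

set_option linter.unusedSectionVars false
set_option maxHeartbeats 800000
noncomputable section
open Polynomial
open scoped Pointwise

section BCH
variable {K L : Type} [Field K] [Field L] [Algebra K L]
  {n m s b t δ h : ℕ} [NeZero n] {α : L} {idx : Fin s → ℕ}

lemma natCast_inj_lt {x y : ℕ} (hx : x < n) (hy : y < n) (hxy : (x : ZMod n) = y) : x = y := by
  have h3 : x % n = y % n := (ZMod.natCast_eq_natCast_iff _ _ _).mp hxy
  rwa [Nat.mod_eq_of_lt hx, Nat.mod_eq_of_lt hy] at h3

lemma prim_ne_zero (hα : IsPrimitiveRoot α n) : α ≠ 0 := by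
  intro h0
  have := hα.pow_eq_one
  rw [h0, zero_pow (NeZero.ne n)] at this
  exact zero_ne_one this

/-- the Vandermonde nodes are injective -/
lemma nodes_injOn (hα : IsPrimitiveRoot α n) (hb : Nat.Coprime b n) :
    Function.Injective (fun i : Fin n => rootPow α ((b : ZMod n) * ((i : ℕ) : ZMod n))) := by
  intro i j hij
  have h1 := rootPow_inj hα hij
  have hbu : IsUnit (b : ZMod n) := (ZMod.isUnit_iff_coprime b n).mpr hb
  have h2 : ((i : ℕ) : ZMod n) = ((j : ℕ) : ZMod n) := hbu.mul_left_cancel h1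
  exact Fin.ext (natCast_inj_lt i.isLt j.isLt h2)

/-- BCH-style bound: a nonzero codeword vanishing on the consecutive block has
weight at least `m + 2h + 1`. -/
lemma bch_bound (hα : IsPrimitiveRoot α n) (hb : Nat.Coprime b n)
    (c : Fin n → K) (hcne : c ≠ 0)
    (hc : ∀ x ∈ Finset.range (m + 2*h), ∑ i : Fin n,
      algebraMap K L (c i) * (rootPow α (fexp n b t h x)) ^ (i : ℕ) = 0) :
    m + 2*h + 1 ≤ wt c := by
  classical
  by_contra hlt
  push_neg at hlt
  set T : Finset (Fin n) := Finset.univ.filter (fun i => c i ≠ 0) with hT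
  have hTcard : T.card ≤ m + 2*h := by
    have : wt c = T.card := rfl
    omega
  set y : Fin n → L := fun i => rootPow α ((b : ZMod n) * ((i : ℕ) : ZMod n)) with hy
  set d : Fin n → L := fun i =>
    algebraMap K L (c i) * rootPow α (((i : ℕ) : ZMod n) * (t : ZMod n) - (b : ZMod n) * (h : ZMod n) * ((i : ℕ) : ZMod n)) with hd
  have key : ∀ w < m + 2*h, ∑ i ∈ T, d i * y i ^ w = 0 := by
    intro w hw
    have h0 := hc w (Finset.mem_range.mpr hw)
    have hterm : ∀ i : Fin n,
        d i * y i ^ w = algebraMap K L (c i) * (rootPow α (fexp n b t h w)) ^ (i : ℕ) := by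
      intro i
      rw [hd, hy]
      simp only
      rw [rootPow_pow hα, rootPow_pow hα, mul_assoc, ← rootPow_add hα]
      congr 1
      unfold fexp
      ring
    have huniv : ∑ i : Fin n, d i * y i ^ w = 0 := by
      rw [Finset.sum_congr rfl (fun i _ => hterm i)]
      exact h0
    have hvan : ∀ i ∈ Finset.univ, i ∉ T → d i * y i ^ w = 0 := by
      intro i _ hiT
      have hci : c i = 0 := by
        by_contra hne
        exact hiT (Finset.mem_filter.mpr ⟨Finset.mem_univ i, hne⟩)
      rw [hd]; simp only [hci, map_zero, zero_mul]
    rw [Finset.sum_subset (Finset.subset_univ T) hvan]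
    exact huniv
  have hz := vdm_zero T y d ((nodes_injOn hα hb).injOn) hTcard key
  obtain ⟨i, hi⟩ : ∃ i, c i ≠ 0 := by
    by_contra hall
    push_neg at hall
    exact hcne (funext hall)
  have hiT : i ∈ T := Finset.mem_filter.mpr ⟨Finset.mem_univ i, hi⟩
  have := hz i hiT
  rw [hd] at this
  simp only at this
  rcases mul_eq_zero.mp this with h1 | h2
  · exact hi ((map_eq_zero_iff _ (algebraMap K L).injective).mp h1)
  · exact rootPow_ne_zero hα _ h2

/-- cyclic shift preserves the code with defining set of roots of unity -/
lemma shift_code {A : Set L} (hA : ∀ β ∈ A, β ^ n = 1 ∧ β ≠ 0)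
    {c : Fin n → L} (hc : c ∈ (cyclicCode L n A : Set (Fin n → L))) (k0 : Fin n) :
    (fun i => c (i + k0)) ∈ (cyclicCode L n A : Set (Fin n → L)) := by
  intro β hβ
  obtain ⟨hβ1, hβ2⟩ := hA β hβ
  have h0 : ∑ i : Fin n, algebraMap L L (c i) * β ^ (i : ℕ) = 0 := hc β hβ
  simp only [Algebra.algebraMap_self_apply] at h0 ⊢
  have hmul : β ^ (k0 : ℕ) * ∑ i : Fin n, c (i + k0) * β ^ (i : ℕ) = 0 := by
    rw [Finset.mul_sum]
    have hterm : ∀ i : Fin n,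
        β ^ (k0 : ℕ) * (c (i + k0) * β ^ (i : ℕ)) = c (i + k0) * β ^ ((i + k0 : Fin n) : ℕ) := by
      intro i
      rw [← mul_assoc, mul_comm (β ^ (k0 : ℕ)), mul_assoc, ← pow_add]
      congr 1
      apply powModEq hβ1
      have hv : ((i + k0 : Fin n) : ℕ) = ((i : ℕ) + (k0 : ℕ)) % n := by rw [Fin.add_def]
      rw [hv, Nat.add_comm (k0 : ℕ)]
      exact (Nat.mod_modEq _ n).symm
    rw [Finset.sum_congr rfl (fun i _ => hterm i)]
    rw [← h0]
    exact Fintype.sum_equiv (Equiv.addRight k0) _ _ (fun i => rfl)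
  rcases mul_eq_zero.mp hmul with h1 | h2
  · exact absurd h1 (pow_ne_zero _ hβ2)
  · exact h2

/-- cyclic shift preserves the dual code -/
lemma shift_dual {A : Set L} (hA : ∀ β ∈ A, β ^ n = 1 ∧ β ≠ 0)
    {u : Fin n → L} (hu : u ∈ dualSet L n (cyclicCode L n A : Set (Fin n → L))) (k0 : Fin n) :
    (fun i => u (i - k0)) ∈ dualSet L n (cyclicCode L n A : Set (Fin n → L)) := by
  intro c hc
  have h1 : ∑ i : Fin n, u (i - k0) * c i = ∑ j : Fin n, u j * c (j + k0) := by
    apply Fintype.sum_equiv (Equiv.subRight k0)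
    intro i
    simp [Equiv.subRight, sub_add_cancel]
  rw [h1]
  exact hu _ (shift_code hA hc k0)

end BCH

set_option linter.unusedSectionVars false
set_option maxHeartbeats 1000000
noncomputable section
open Polynomial
open scoped Pointwise

section Loc
variable {K L : Type} [Field K] [Field L] [Algebra K L]
  {n m s b t δ h dA : ℕ} [NeZero n] {α : L} {idx : Fin s → ℕ}

lemma locality_main (hα : IsPrimitiveRoot α n) (hb : Nat.Coprime b n)
    (hm : 0 < m) (hδh : δ = 2*h + 2)
    (A B : Set L)
    (hAdef : A = {x : L | ∃ j < m, x = α ^ (t + j * b)} ∪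
      {x : L | ∃ l : Fin s, x = α ^ (t + idx l * b)})
    (hBdef : B = {x : L | ∃ e ≤ (δ - 2) / 2, x = α ^ (e * b) ∨ x = (α ^ (e * b))⁻¹})
    (u : Fin n → L) (hu : u ∈ dualSet L n (cyclicCode L n A : Set (Fin n → L)))
    (hune : u ≠ 0) (hwt : wt u = dA) :
    HasLocality (cyclicCodeOn K L n (A * B) : Set (Fin n → K)) (dA - δ + 1) δ := by
  classical
  have hhalf : (δ - 2) / 2 = h := by omega
  have hA : ∀ β ∈ A, β ^ n = 1 ∧ β ≠ 0 := by
    intro β hβ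
    rw [hAdef] at hβ
    have hαn : α ^ n = 1 := hα.pow_eq_one
    have hα0 : α ≠ 0 := prim_ne_zero hα
    rcases hβ with ⟨j, _, rfl⟩ | ⟨l, rfl⟩ <;>
      exact ⟨by rw [← pow_mul, mul_comm, pow_mul, hαn, one_pow], pow_ne_zero _ hα0⟩
  intro i0
  obtain ⟨j0, hj0⟩ : ∃ j0, u j0 ≠ 0 := by
    by_contra hall; push_neg at hall; exact hune (funext hall)
  set k0 : Fin n := i0 - j0 with hk0
  set u' : Fin n → L := fun i => u (i - k0) with hu'def
  have hu'dual : u' ∈ dualSet L n (cyclicCode L n A : Set (Fin n → L)) := shift_dual hA hu k0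
  have hu'i0 : u' i0 ≠ 0 := by
    have : i0 - k0 = j0 := by rw [hk0]; exact sub_sub_cancel i0 j0
    rw [hu'def]; simp only [this]; exact hj0
  set S : Finset (Fin n) := Finset.univ.filter (fun i => u' i ≠ 0) with hS
  have hScard : S.card = dA := by
    rw [← hwt]
    apply Finset.card_bij' (fun i _ => i - k0) (fun j _ => j + k0)
    · intro i hi
      simp only [wt, Finset.mem_filter, Finset.mem_univ, true_and]
      exact (Finset.mem_filter.mp hi).2
    · intro j hj
      simp only [hS, Finset.mem_filter, Finset.mem_univ, true_and, hu'def,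
        add_sub_cancel_right]
      have hj' := Finset.mem_filter.mp hj
      exact hj'.2
    · intro i _; exact sub_add_cancel i k0
    · intro j _; exact add_sub_cancel_right j k0
  refine ⟨S, Finset.mem_filter.mpr ⟨Finset.mem_univ i0, hu'i0⟩, by omega, ?_⟩
  intro c hc c' hc' hne
  obtain ⟨j, hjS, hjne⟩ := hne
  by_contra hcard
  push_neg at hcard
  set v : Fin n → K := c - c' with hv
  have hvC : v ∈ cyclicCodeOn K L n (A * B) :=
    Submodule.sub_mem _ (SetLike.mem_coe.mp hc) (SetLike.mem_coe.mp hc')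
  have hvmem : ∀ γ ∈ A * B, ∑ i : Fin n, algebraMap K L (v i) * γ ^ (i : ℕ) = 0 := hvC
  have hfeq : Finset.filter (fun j => c j ≠ c' j) S = Finset.filter (fun j => v j ≠ 0) S := by
    apply Finset.filter_congr
    intro x _
    simp [hv, sub_ne_zero]
  set T : Finset (Fin n) := Finset.filter (fun j => v j ≠ 0) S with hTdef
  have hTcard : T.card ≤ 2*h + 1 := by
    have h1 : (Finset.filter (fun j => c j ≠ c' j) S).card < δ := hcard
    rw [hfeq] at h1
    omega
  have hgB : ∀ w : ℕ, w ≤ 2*h →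
      rootPow α ((b : ZMod n) * ((w : ZMod n) - (h : ZMod n))) ∈ B := by
    intro w hw
    rcases Nat.lt_or_ge w h with hlt | hge
    · have hcast : (b : ZMod n) * ((w : ZMod n) - (h : ZMod n))
          = -((((h - w) * b : ℕ) : ZMod n)) := by
        have : (((h - w) : ℕ) : ZMod n) = (h : ZMod n) - (w : ZMod n) := by
          push_cast [Nat.cast_sub hlt.le]; ring
        push_cast [this]; ring
      rw [hcast, rootPow_neg hα, rootPow_natCast hα, hBdef]
      exact ⟨h - w, by omega, Or.inr rfl⟩
    · have hcast : (b : ZMod n) * ((w : ZMod n) - (h : ZMod n))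
          = ((((w - h) * b : ℕ) : ZMod n)) := by
        have : (((w - h) : ℕ) : ZMod n) = (w : ZMod n) - (h : ZMod n) := by
          push_cast [Nat.cast_sub hge]; ring
        push_cast [this]; ring
      rw [hcast, rootPow_natCast hα, hBdef]
      exact ⟨w - h, by omega, Or.inl rfl⟩
  set y : Fin n → L := fun i => rootPow α ((b : ZMod n) * ((i : ℕ) : ZMod n)) with hy
  set d : Fin n → L := fun i => u' i * (algebraMap K L (v i) *
    rootPow α (-((b : ZMod n) * (h : ZMod n) * ((i : ℕ) : ZMod n)))) with hd
  have key : ∀ w < 2*h + 1, ∑ i ∈ T, d i * y i ^ w = 0 := by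
    intro w hw
    set g : L := rootPow α ((b : ZMod n) * ((w : ZMod n) - (h : ZMod n))) with hg
    have hVw : (fun i : Fin n => algebraMap K L (v i) * g ^ (i : ℕ))
        ∈ (cyclicCode L n A : Set (Fin n → L)) := by
      intro β hβ
      simp only [Algebra.algebraMap_self_apply]
      have h1 := hvmem (β * g) (Set.mul_mem_mul hβ (hgB w (by omega)))
      rw [← h1]
      apply Finset.sum_congr rfl
      intro i _
      rw [mul_pow]
      ring
    have horth := hu'dual _ hVw
    have hterm : ∀ i : Fin n, u' i * (algebraMap K L (v i) * g ^ (i : ℕ)) = d i * y i ^ w := by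
      intro i
      rw [hd, hg, hy]
      simp only
      rw [rootPow_pow hα, rootPow_pow hα]
      have : rootPow α (-((b : ZMod n) * (h : ZMod n) * ((i : ℕ) : ZMod n)))
            * rootPow α ((w : ZMod n) * ((b : ZMod n) * ((i : ℕ) : ZMod n)))
          = rootPow α (((i : ℕ) : ZMod n) * ((b : ZMod n) * ((w : ZMod n) - (h : ZMod n)))) := by
        rw [← rootPow_add hα]
        congr 1
        ring
      rw [← this]
      ring
    have huniv : ∑ i : Fin n, d i * y i ^ w = 0 := by
      rw [← Finset.sum_congr rfl (fun i _ => hterm i)]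
      exact horth
    have hvan : ∀ i ∈ Finset.univ, i ∉ T → d i * y i ^ w = 0 := by
      intro i _ hiT
      rw [hd]
      simp only
      rcases Classical.em (u' i = 0) with h1 | h1
      · rw [h1, zero_mul, zero_mul]
      · have hiS : i ∈ S := Finset.mem_filter.mpr ⟨Finset.mem_univ i, h1⟩
        have : v i = 0 := by
          by_contra h2
          exact hiT (Finset.mem_filter.mpr ⟨hiS, h2⟩)
        rw [this]
        simp
    rw [Finset.sum_subset (Finset.subset_univ T) hvan]
    exact huniv
  have hz := vdm_zero T y d ((nodes_injOn hα hb).injOn) hTcard key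
  have hjT : j ∈ T := by
    apply Finset.mem_filter.mpr
    refine ⟨hjS, ?_⟩
    rw [hv]
    exact sub_ne_zero_of_ne hjne
  have hdj := hz j hjT
  rw [hd] at hdj
  simp only at hdj
  have hu'j : u' j ≠ 0 := (Finset.mem_filter.mp hjS).2
  have hvj : v j ≠ 0 := (Finset.mem_filter.mp hjT).2
  have : algebraMap K L (v j) ≠ 0 := fun hh =>
    hvj ((map_eq_zero_iff _ (algebraMap K L).injective).mp hh)
  exact (mul_ne_zero hu'j (mul_ne_zero this (rootPow_ne_zero hα _))) hdj

end Loc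

set_option linter.unusedSectionVars false
set_option maxHeartbeats 1000000
noncomputable section
open Polynomial
open scoped Pointwise

section Dim

variable {K : Type} [Field K]

lemma vecPoly_coeff {n : ℕ} (c : Fin n → K) (j : ℕ) :
    (vecPoly c).coeff j = if hj : j < n then c ⟨j, hj⟩ else 0 := by
  unfold vecPoly
  rw [Polynomial.finset_sum_coeff]
  by_cases hj : j < n
  · rw [dif_pos hj]
    rw [Finset.sum_eq_single (⟨j, hj⟩ : Fin n)]
    · simp [Polynomial.coeff_C_mul, Polynomial.coeff_X_pow]
    · intro i _ hne
      simp only [Polynomial.coeff_C_mul, Polynomial.coeff_X_pow]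
      rw [if_neg, mul_zero]
      intro hcontra
      exact hne (Fin.ext hcontra.symm)
    · intro hcontra
      exact absurd (Finset.mem_univ _) hcontra
  · rw [dif_neg hj]
    apply Finset.sum_eq_zero
    intro i _
    simp only [Polynomial.coeff_C_mul, Polynomial.coeff_X_pow]
    rw [if_neg, mul_zero]
    intro hcontra
    exact hj (hcontra ▸ i.isLt)

lemma vecPoly_natDegree_lt {n : ℕ} (hn : 0 < n) (c : Fin n → K) :
    (vecPoly c).natDegree < n := by
  have h1 : (vecPoly c).natDegree ≤ n - 1 := by
    rw [Polynomial.natDegree_le_iff_coeff_eq_zero]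
    intro N hN
    rw [vecPoly_coeff, dif_neg (by omega)]
  omega

lemma vecPoly_of_poly {n : ℕ} (p : K[X]) (hp : p.natDegree < n) :
    vecPoly (fun i : Fin n => p.coeff (i : ℕ)) = p := by
  apply Polynomial.ext
  intro j
  rw [vecPoly_coeff]
  by_cases hj : j < n
  · rw [dif_pos hj]
  · rw [dif_neg hj]
    exact (Polynomial.coeff_eq_zero_of_natDegree_lt (by omega)).symm

lemma vecPoly_eq_zero_iff {n : ℕ} (c : Fin n → K) : vecPoly c = 0 ↔ c = 0 := by
  constructor
  · intro h
    funext i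
    have := vecPoly_coeff c (i : ℕ)
    rw [h, Polynomial.coeff_zero, dif_pos i.isLt] at this
    simpa using this.symm
  · rintro rfl
    unfold vecPoly
    simp

lemma prod_X_sub_C_dvd_iff {F : Type*} [Field F] (S : Finset F) (p : F[X]) :
    (∏ β ∈ S, (X - C β)) ∣ p ↔ ∀ β ∈ S, p.eval β = 0 := by
  classical
  induction S using Finset.cons_induction with
  | empty => simp
  | cons a S' ha ih =>
    rw [Finset.prod_cons]
    constructor
    · intro hdvd β hβ
      rcases Finset.mem_cons.mp hβ with rfl | hβ'
      · have : (X - C β) ∣ p := dvd_trans (Dvd.intro _ rfl) hdvd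
        exact (Polynomial.dvd_iff_isRoot).mp this
      · have h2 : (∏ β ∈ S', (X - C β)) ∣ p := dvd_trans ⟨X - C a, mul_comm _ _⟩ hdvd
        exact ih.mp h2 β hβ'
    · intro hev
      have h1 : (X - C a) ∣ p :=
        (Polynomial.dvd_iff_isRoot).mpr (hev a (Finset.mem_cons_self a S'))
      have h2 : (∏ β ∈ S', (X - C β)) ∣ p :=
        ih.mpr (fun β hβ => hev β (Finset.mem_cons.mpr (Or.inr hβ)))
      have hcop : IsCoprime (X - C a) (∏ β ∈ S', (X - C β)) := by
        apply IsCoprime.prod_right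
        intro β hβ
        apply Polynomial.isCoprime_X_sub_C_of_isUnit_sub
        have : a ≠ β := fun hcontra => ha (hcontra ▸ hβ)
        exact (sub_ne_zero_of_ne this).isUnit
      exact hcop.mul_dvd h1 h2

lemma fix_mem_range {K L : Type} [Field K] [Fintype K] [Field L] [Algebra K L] (x : L)
    (hx : x ^ (Fintype.card K) = x) : x ∈ Set.range (algebraMap K L) := by
  classical
  set q := Fintype.card K with hq
  have hq2 : 1 < q := Fintype.one_lt_card
  set P : L[X] := X ^ q - X with hP
  have hPne : P ≠ 0 := FiniteField.X_pow_card_sub_X_ne_zero L hq2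
  have hPdeg : P.natDegree = q := FiniteField.X_pow_card_sub_X_natDegree_eq L hq2
  set Sf : Finset L := Finset.univ.image (algebraMap K L) with hSf
  have hSfcard : Sf.card = q := by
    rw [hSf, Finset.card_image_of_injective _ (algebraMap K L).injective, Finset.card_univ]
  have hroots : ∀ y ∈ Sf, P.IsRoot y := by
    intro y hy
    obtain ⟨z, _, rfl⟩ := Finset.mem_image.mp hy
    have : (algebraMap K L z) ^ q = algebraMap K L z := by
      rw [← map_pow, FiniteField.pow_card]
    simp [hP, Polynomial.IsRoot, sub_eq_zero, this]
  by_contra hxout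
  have hxSf : x ∉ Sf := by
    intro hmem
    obtain ⟨z, _, hz⟩ := Finset.mem_image.mp hmem
    exact hxout ⟨z, hz⟩
  have hxroot : P.IsRoot x := by
    simp [hP, Polynomial.IsRoot, sub_eq_zero, hx]
  have hsub : insert x Sf ⊆ P.roots.toFinset := by
    intro y hy
    rw [Multiset.mem_toFinset, Polynomial.mem_roots']
    rcases Finset.mem_insert.mp hy with rfl | hy'
    · exact ⟨hPne, hxroot⟩
    · exact ⟨hPne, hroots y hy'⟩
  have hcard : (insert x Sf).card = q + 1 := by
    rw [Finset.card_insert_of_notMem hxSf, hSfcard]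
  have hle : q + 1 ≤ P.roots.toFinset.card := hcard ▸ Finset.card_le_card hsub
  have : P.roots.toFinset.card ≤ q := le_trans (Multiset.toFinset_card_le _)
    (le_trans (Polynomial.card_roots' P) (le_of_eq hPdeg))
  omega

lemma exists_frob (K L : Type) [Field K] [Fintype K] [Field L] [Fintype L] [Algebra K L] :
    ∃ φ : L →+* L, ∀ x, φ x = x ^ (Fintype.card K) := by
  obtain ⟨p, hcharK⟩ := CharP.exists K
  haveI : CharP K p := hcharK
  have hp : p.Prime := CharP.char_is_prime K p
  haveI : Fact p.Prime := ⟨hp⟩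
  haveI : CharP L p := charP_of_injective_algebraMap (algebraMap K L).injective p
  haveI : ExpChar L p := ExpChar.prime hp
  obtain ⟨f, -, hcard⟩ := FiniteField.card K p
  refine ⟨iterateFrobenius L p f, fun x => ?_⟩
  rw [iterateFrobenius_def, hcard]

lemma descent {K L : Type} [Field K] [Fintype K] [Field L] [Fintype L] [Algebra K L]
    (Zf : Finset L) (hclosed : ∀ β ∈ Zf, β ^ (Fintype.card K) ∈ Zf) :
    ∃ gK : K[X], gK.Monic ∧ gK.map (algebraMap K L) = ∏ β ∈ Zf, (X - C β) := by
  classical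
  obtain ⟨φ, hφ⟩ := exists_frob K L
  set gL : L[X] := ∏ β ∈ Zf, (X - C β) with hgL
  have hmonic : gL.Monic := monic_prod_of_monic _ _ (fun β _ => monic_X_sub_C β)
  have hφinj : Function.Injective φ := φ.injective
  have hmap : gL.map φ = gL := by
    rw [hgL, Polynomial.map_prod]
    have h1 : ∀ β ∈ Zf, ((X : L[X]) - C β).map φ = X - C (β ^ (Fintype.card K)) := by
      intro β _
      rw [Polynomial.map_sub, Polynomial.map_X, Polynomial.map_C, hφ]
    rw [Finset.prod_congr rfl h1]
    apply Finset.prod_bij (fun β _ => β ^ (Fintype.card K))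
    · intro β hβ; exact hclosed β hβ
    · intro β1 h1 β2 h2 heq
      apply hφinj
      rw [hφ, hφ]; exact heq
    · intro γ hγ
      have hinj : ∀ (a₁ a₂ : L), a₁ ∈ Zf → a₂ ∈ Zf →
          a₁ ^ Fintype.card K = a₂ ^ Fintype.card K → a₁ = a₂ := by
        intro a _ _ _ heq
        apply hφinj
        rw [hφ, hφ]; exact heq
      obtain ⟨a, ha, heq⟩ := Finset.surj_on_of_inj_on_of_card_le
        (fun β _ => β ^ (Fintype.card K)) (fun β hβ => hclosed β hβ) hinj (le_refl _) γ hγ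
      exact ⟨a, ha, heq.symm⟩
    · intro β _; rfl
  have hfix : ∀ i, gL.coeff i ∈ Set.range (algebraMap K L) := by
    intro i
    apply fix_mem_range
    have := congrArg (fun p => Polynomial.coeff p i) hmap
    simpa [Polynomial.coeff_map, hφ] using this
  have hlift : gL ∈ Polynomial.lifts (algebraMap K L) :=
    (Polynomial.lifts_iff_coeff_lifts gL).mpr hfix
  obtain ⟨gK, h1, -, h3⟩ := Polynomial.lifts_and_degree_eq_and_monic hlift hmonic
  exact ⟨gK, h3, h1⟩

/-- The evaluation of the mapped vector polynomial. -/
lemma eval_map_vecPoly {K L : Type} [Field K] [Field L] [Algebra K L] {n : ℕ}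
    (c : Fin n → K) (β : L) :
    ((vecPoly c).map (algebraMap K L)).eval β = ∑ i : Fin n, algebraMap K L (c i) * β ^ (i : ℕ) := by
  unfold vecPoly
  rw [Polynomial.map_sum]
  rw [Polynomial.eval_finset_sum]
  apply Finset.sum_congr rfl
  intro i _
  rw [Polynomial.map_mul, Polynomial.map_C, Polynomial.map_pow, Polynomial.map_X]
  simp

/-- The dimension of a code given by divisibility by a monic `g` of degree `z ≤ n`. -/
lemma code_finrank {n z : ℕ} (hn : 0 < n) (hz : z ≤ n) (g : K[X])
    (hmonic : g.Monic) (hdeg : g.natDegree = z)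
    (Cd : Submodule K (Fin n → K)) (hmem : ∀ c, c ∈ Cd ↔ g ∣ vecPoly c) :
    Module.finrank K Cd = n - z := by
  classical
  have hgne : g ≠ 0 := hmonic.ne_zero
  set Ψfun : (Fin (n - z) → K) → (Fin n → K) :=
    fun a => fun i => (g * vecPoly a).coeff (i : ℕ) with hΨfun
  have haddvec : ∀ (a b : Fin (n-z) → K), vecPoly (a + b) = vecPoly a + vecPoly b := by
    intro a b
    unfold vecPoly
    rw [← Finset.sum_add_distrib]
    apply Finset.sum_congr rfl
    intro i _
    simp [Polynomial.C_add, add_mul]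
  have hsmulvec : ∀ (r : K) (a : Fin (n-z) → K), vecPoly (r • a) = C r * vecPoly a := by
    intro r a
    unfold vecPoly
    rw [Finset.mul_sum]
    apply Finset.sum_congr rfl
    intro i _
    simp [Polynomial.C_mul, mul_assoc]
  set Ψ : (Fin (n - z) → K) →ₗ[K] (Fin n → K) :=
    { toFun := Ψfun
      map_add' := by
        intro a b
        funext i
        simp only [hΨfun, haddvec, mul_add, Polynomial.coeff_add, Pi.add_apply]
      map_smul' := by
        intro r a
        funext i
        simp only [hΨfun, hsmulvec, RingHom.id_apply, Pi.smul_apply, smul_eq_mul]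
        rw [mul_left_comm, Polynomial.coeff_C_mul] } with hΨ
  have hdegmul : ∀ a : Fin (n - z) → K, (g * vecPoly a).natDegree < n := by
    intro a
    by_cases hva : vecPoly a = 0
    · rw [hva, mul_zero]
      simpa using hn
    · have hnz : 0 < n - z := by
        by_contra hc
        push_neg at hc
        interval_cases hnz : (n - z)
        · exact hva (by unfold vecPoly; simp [Finset.univ_eq_empty])
      rw [Polynomial.natDegree_mul hgne hva, hdeg]
      have := vecPoly_natDegree_lt hnz a
      omega
  have hvecΨ : ∀ a : Fin (n - z) → K, vecPoly (Ψ a) = g * vecPoly a := by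
    intro a
    exact vecPoly_of_poly _ (hdegmul a)
  have hrange : LinearMap.range Ψ = Cd := by
    apply le_antisymm
    · rintro c ⟨a, rfl⟩
      rw [hmem, hvecΨ]
      exact Dvd.intro _ rfl
    · intro c hc
      rw [hmem] at hc
      obtain ⟨w, hw⟩ := hc
      by_cases hvc : vecPoly c = 0
      · have : c = 0 := (vecPoly_eq_zero_iff c).mp hvc
        rw [this]
        exact Submodule.zero_mem _
      · have hwne : w ≠ 0 := by
          intro h0; rw [h0, mul_zero] at hw; exact hvc hw
        have hwdeg : w.natDegree < n - z := by
          have h1 : (vecPoly c).natDegree < n := vecPoly_natDegree_lt hn c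
          rw [hw, Polynomial.natDegree_mul hgne hwne, hdeg] at h1
          omega
        refine ⟨fun i => w.coeff (i : ℕ), ?_⟩
        funext i
        show (g * vecPoly (fun i : Fin (n-z) => w.coeff (i : ℕ))).coeff (i : ℕ) = c i
        rw [vecPoly_of_poly w hwdeg, ← hw, vecPoly_coeff, dif_pos i.isLt]
    -- done
  have hinj : Function.Injective Ψ := by
    rw [← LinearMap.ker_eq_bot]
    apply LinearMap.ker_eq_bot'.mpr
    intro a ha
    have hcoeffs : ∀ j : ℕ, j < n → (g * vecPoly a).coeff j = 0 := by
      intro j hj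
      have := congrFun ha ⟨j, hj⟩
      exact this
    have hzero : g * vecPoly a = 0 := by
      apply Polynomial.ext
      intro j
      by_cases hj : j < n
      · rw [hcoeffs j hj, Polynomial.coeff_zero]
      · rw [Polynomial.coeff_eq_zero_of_natDegree_lt (lt_of_lt_of_le (hdegmul a) (by omega)),
          Polynomial.coeff_zero]
    have hva : vecPoly a = 0 := by
      rcases mul_eq_zero.mp hzero with h1 | h2
      · exact absurd h1 hgne
      · exact h2
    exact (vecPoly_eq_zero_iff a).mp hva
  have h1 : Module.finrank K Cd = Module.finrank K (LinearMap.range Ψ) := by rw [hrange]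
  rw [h1, LinearMap.finrank_range_of_inj hinj]
  rw [Module.finrank_pi]
  simp

end Dim

set_option linter.unusedSectionVars false
set_option maxHeartbeats 1000000
noncomputable section
open Polynomial

/-- restriction to coordinates in `J` -/
def pj (K : Type) [Field K] {n : ℕ} (J : Finset (Fin n)) : (Fin n → K) →ₗ[K] (↥J → K) :=
  LinearMap.funLeft K K Subtype.val

/-- rank of the projection of the code onto `J` -/
def rkJ (K : Type) [Field K] {n : ℕ} (Cd : Submodule K (Fin n → K)) (J : Finset (Fin n)) : ℕ :=
  Module.finrank K (Cd.map (pj K J))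

section Rk
variable {K : Type} [Field K] {n : ℕ} (Cd : Submodule K (Fin n → K))

lemma pj_comp {J J' : Finset (Fin n)} (h : J ⊆ J') :
    pj K J = (LinearMap.funLeft K K (fun x : ↥J => (⟨x.1, h x.2⟩ : ↥J'))).comp (pj K J') := by
  unfold pj
  rw [← LinearMap.funLeft_comp]
  rfl

lemma map_pj {J J' : Finset (Fin n)} (h : J ⊆ J') :
    (Cd.map (pj K J')).map (LinearMap.funLeft K K (fun x : ↥J => (⟨x.1, h x.2⟩ : ↥J')))
      = Cd.map (pj K J) := by
  rw [← Submodule.map_comp, ← pj_comp h]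

lemma rk_mono {J J' : Finset (Fin n)} (h : J ⊆ J') : rkJ K Cd J ≤ rkJ K Cd J' := by
  unfold rkJ
  rw [← map_pj Cd h]
  exact Submodule.finrank_map_le _ _

lemma rk_card (J : Finset (Fin n)) : rkJ K Cd J ≤ J.card := by
  have h1 : rkJ K Cd J ≤ Module.finrank K (↥J → K) := Submodule.finrank_le _
  rwa [Module.finrank_pi, Fintype.card_coe] at h1

/-- rank–nullity for a restriction map between two coordinate projections -/
lemma rk_add_ker {J J' : Finset (Fin n)} (h : J ⊆ J') :
    rkJ K Cd J' = rkJ K Cd J + Module.finrank K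
      (LinearMap.ker ((LinearMap.funLeft K K
        (fun x : ↥J => (⟨x.1, h x.2⟩ : ↥J'))).domRestrict (Cd.map (pj K J')))) := by
  have := LinearMap.finrank_range_add_finrank_ker
    ((LinearMap.funLeft K K (fun x : ↥J => (⟨x.1, h x.2⟩ : ↥J'))).domRestrict (Cd.map (pj K J')))
  rw [LinearMap.range_domRestrict, map_pj Cd h] at this
  unfold rkJ
  omega

/-- membership of projections -/
lemma mem_map_pj (J : Finset (Fin n)) (x : ↥J → K) :
    x ∈ Cd.map (pj K J) ↔ ∃ c ∈ Cd, ∀ j : ↥J, c j.1 = x j := by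
  constructor
  · rintro ⟨c, hc, rfl⟩
    exact ⟨c, hc, fun j => rfl⟩
  · rintro ⟨c, hc, hcx⟩
    exact ⟨c, hc, funext fun j => hcx j⟩

end Rk

set_option linter.unusedSectionVars false
set_option maxHeartbeats 1000000
set_option synthInstance.maxHeartbeats 400000
noncomputable section
open Polynomial

section Rk2
variable {K : Type} [Field K] {n : ℕ} (Cd : Submodule K (Fin n → K))

open Classical in
/-- deletion of at most `δ - 1` coordinates of a recovery set does not change the rank -/
lemma rk_del (S D W : Finset (Fin n)) (hDS : D ⊆ S) (hSW : S ⊆ W) {δ : ℕ}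
    (hD : D.card < δ)
    (hLP : ∀ c ∈ Cd, ∀ c' ∈ Cd, (∃ j ∈ S, c j ≠ c' j) →
      δ ≤ (S.filter fun j => c j ≠ c' j).card) :
    rkJ K Cd W = rkJ K Cd (W \ D) := by
  have hsub : W \ D ⊆ W := Finset.sdiff_subset
  rw [rk_add_ker Cd hsub]
  have hker : LinearMap.ker ((LinearMap.funLeft K K
      (fun x : ↥(W \ D) => (⟨x.1, hsub x.2⟩ : ↥W))).domRestrict (Cd.map (pj K W))) = ⊥ := by
    rw [Submodule.eq_bot_iff]
    intro x hx
    obtain ⟨c, hc, hcx⟩ := (mem_map_pj Cd W x.1).mp x.2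
    rw [LinearMap.mem_ker] at hx
    have hvan : ∀ j, ∀ hj : j ∈ W \ D, c j = 0 := by
      intro j hj
      have h0 : (LinearMap.funLeft K K (fun x : ↥(W \ D) => (⟨x.1, hsub x.2⟩ : ↥W))) x.1 = 0 := hx
      have h1 : x.1 ⟨j, hsub hj⟩ = 0 := congrFun h0 (⟨j, hj⟩ : ↥(W \ D))
      rw [← hcx ⟨j, hsub hj⟩] at h1
      exact h1
    have hS0 : ∀ j ∈ S, c j = 0 := by
      by_contra hcon
      push_neg at hcon
      obtain ⟨j, hjS, hjne⟩ := hcon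
      have h2 := hLP c hc 0 (Submodule.zero_mem Cd) ⟨j, hjS, by simpa using hjne⟩
      have h3 : (S.filter fun j => c j ≠ (0 : Fin n → K) j) ⊆ D := by
        intro j' hj'
        have hj'S := (Finset.mem_filter.mp hj').1
        have hj'ne : c j' ≠ 0 := by simpa using (Finset.mem_filter.mp hj').2
        by_contra hj'D
        exact hj'ne (hvan j' (Finset.mem_sdiff.mpr ⟨hSW hj'S, hj'D⟩))
      have h4 := Finset.card_le_card h3
      omega
    have hcW : ∀ j ∈ W, c j = 0 := by
      intro j hj
      by_cases hjD : j ∈ D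
      · exact hS0 j (hDS hjD)
      · exact hvan j (Finset.mem_sdiff.mpr ⟨hj, hjD⟩)
    apply Subtype.ext
    funext j
    rw [← hcx j]
    exact hcW j.1 j.2
  rw [hker, finrank_bot, add_zero]

lemma rk_exists_vanish (J : Finset (Fin n)) (hlt : rkJ K Cd J < Module.finrank K Cd) :
    ∃ c, c ∈ Cd ∧ c ≠ 0 ∧ ∀ j ∈ J, c j = 0 := by
  have hrn := LinearMap.finrank_range_add_finrank_ker ((pj K J).domRestrict Cd)
  rw [LinearMap.range_domRestrict] at hrn
  have hkerpos : 0 < Module.finrank K (LinearMap.ker ((pj K J).domRestrict Cd)) := by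
    unfold rkJ at hlt
    omega
  have hne : LinearMap.ker ((pj K J).domRestrict Cd) ≠ ⊥ := by
    intro hbot
    rw [hbot, finrank_bot] at hkerpos
    omega
  obtain ⟨x, hxker, hxne⟩ := (Submodule.ne_bot_iff _).mp hne
  refine ⟨x.1, x.2, ?_, ?_⟩
  · intro h0
    exact hxne (Subtype.ext h0)
  · intro j hj
    rw [LinearMap.mem_ker] at hxker
    exact congrFun hxker (⟨j, hj⟩ : ↥J)

lemma rk_step_up (J : Finset (Fin n)) (i : Fin n) (c : Fin n → K) (hc : c ∈ Cd)
    (hvan : ∀ j ∈ J, c j = 0) (hci : c i ≠ 0) :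
    rkJ K Cd J + 1 ≤ rkJ K Cd (insert i J) := by
  have hsub : J ⊆ insert i J := Finset.subset_insert i J
  rw [rk_add_ker Cd hsub]
  have hwit : (⟨pj K (insert i J) c, ⟨c, hc, rfl⟩⟩ :
      ↥(Cd.map (pj K (insert i J)))) ∈ LinearMap.ker ((LinearMap.funLeft K K
      (fun x : ↥J => (⟨x.1, hsub x.2⟩ : ↥(insert i J)))).domRestrict
      (Cd.map (pj K (insert i J)))) := by
    rw [LinearMap.mem_ker]
    funext j
    exact hvan j.1 j.2
  have hne : LinearMap.ker ((LinearMap.funLeft K K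
      (fun x : ↥J => (⟨x.1, hsub x.2⟩ : ↥(insert i J)))).domRestrict
      (Cd.map (pj K (insert i J)))) ≠ ⊥ := by
    intro hbot
    rw [Submodule.eq_bot_iff] at hbot
    have := hbot _ hwit
    have h1 := congrArg Subtype.val this
    have h2 := congrFun h1 (⟨i, Finset.mem_insert_self i J⟩ : ↥(insert i J))
    exact hci h2
  have hpos : 0 < Module.finrank K (LinearMap.ker ((LinearMap.funLeft K K
      (fun x : ↥J => (⟨x.1, hsub x.2⟩ : ↥(insert i J)))).domRestrict
      (Cd.map (pj K (insert i J))))) := by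
    by_contra hz
    push_neg at hz
    have h0 : Module.finrank K _ = 0 := Nat.le_zero.mp hz
    exact hne (Submodule.finrank_eq_zero.mp h0)
  omega

lemma rk_split (J S : Finset (Fin n)) : rkJ K Cd (J ∪ S) ≤ rkJ K Cd J + rkJ K Cd S := by
  have hsub : J ⊆ J ∪ S := Finset.subset_union_left
  rw [rk_add_ker Cd hsub]
  set kerM := LinearMap.ker ((LinearMap.funLeft K K
      (fun x : ↥J => (⟨x.1, hsub x.2⟩ : ↥(J ∪ S)))).domRestrict
      (Cd.map (pj K (J ∪ S)))) with hkerM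
  have hbound : Module.finrank K kerM ≤ rkJ K Cd S := by
    set ψ : ↥kerM →ₗ[K] (↥S → K) :=
      (LinearMap.funLeft K K (fun x : ↥S =>
        (⟨x.1, Finset.subset_union_right x.2⟩ : ↥(J ∪ S)))).comp
        ((Cd.map (pj K (J ∪ S))).subtype.comp kerM.subtype) with hψ
    have hkerψ : LinearMap.ker ψ = ⊥ := by
      rw [Submodule.eq_bot_iff]
      intro z hz
      rw [LinearMap.mem_ker] at hz
      apply Subtype.ext
      apply Subtype.ext
      funext j
      rcases Finset.mem_union.mp j.2 with hjJ | hjS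
      · have hk := LinearMap.mem_ker.mp z.2
        exact congrFun hk (⟨j.1, hjJ⟩ : ↥J)
      · exact congrFun hz (⟨j.1, hjS⟩ : ↥S)
    have hinj : Function.Injective ψ := by
      intro a b hab
      have hm : a - b ∈ LinearMap.ker ψ := by
        rw [LinearMap.mem_ker]; exact (ψ.map_sub a b).trans (by rw [hab, sub_self])
      rw [hkerψ, Submodule.mem_bot] at hm
      exact sub_eq_zero.mp hm
    have hrangele : LinearMap.range ψ ≤ Cd.map (pj K S) := by
      rintro y ⟨x, rfl⟩
      obtain ⟨c, hc, hcx⟩ := (mem_map_pj Cd (J ∪ S) x.1.1).mp x.1.2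
      refine ⟨c, hc, ?_⟩
      funext j
      exact hcx ⟨j.1, Finset.subset_union_right j.2⟩
    have h1 : Module.finrank K kerM = Module.finrank K (LinearMap.range ψ) :=
      (LinearMap.finrank_range_of_inj hinj).symm
    rw [h1]
    exact Submodule.finrank_mono hrangele
  omega

lemma rk_empty : rkJ K Cd ∅ = 0 := by
  have := rk_card Cd (∅ : Finset (Fin n))
  simpa using this

end Rk2

set_option linter.unusedSectionVars false
set_option maxHeartbeats 1000000
set_option synthInstance.maxHeartbeats 400000
noncomputable section
open Polynomial

section Singleton
variable {K : Type} [Field K] {n : ℕ}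

open Classical in
lemma singleton_phase1 (Cd : Submodule K (Fin n → K)) {r δ k : ℕ} (hδ2 : 2 ≤ δ)
    (hloc : HasLocality (Cd : Set (Fin n → K)) r δ)
    (hk : Module.finrank K Cd = k) :
    ∀ t : ℕ, (t * r < k) → ∃ J : Finset (Fin n),
      rkJ K Cd J ≤ t * r ∧ rkJ K Cd J + t * (δ - 1) ≤ J.card := by
  intro t
  induction t with
  | zero =>
    intro _
    exact ⟨∅, by simp [rk_empty], by simp [rk_empty]⟩
  | succ t ih =>
    intro hlt
    have hstepm : t * r ≤ (t+1) * r := Nat.mul_le_mul_right r (by omega)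
    have hlt' : t * r < k := lt_of_le_of_lt hstepm hlt
    obtain ⟨J, hJ1, hJ2⟩ := ih hlt'
    have hrkJk : rkJ K Cd J < k := lt_of_le_of_lt hJ1 hlt'
    obtain ⟨c, hc, hcne, hcvan⟩ := rk_exists_vanish Cd J (by rw [hk]; exact hrkJk)
    obtain ⟨i, hci⟩ : ∃ i, c i ≠ 0 := by
      by_contra hall; push_neg at hall; exact hcne (funext hall)
    obtain ⟨S, hiS, hScard, hLP⟩ := hloc i
    have hLP' : ∀ a ∈ Cd, ∀ a' ∈ Cd, (∃ j ∈ S, a j ≠ a' j) →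
        δ ≤ (S.filter fun j => a j ≠ a' j).card := fun a ha b hb => hLP a ha b hb
    have hiJ : i ∉ J := fun hiJ => hci (hcvan i hiJ)
    have hstep : rkJ K Cd J + 1 ≤ rkJ K Cd (insert i J) := rk_step_up Cd J i c hc hcvan hci
    have hins : insert i J ⊆ J ∪ S := by
      intro x hx
      rcases Finset.mem_insert.mp hx with rfl | hxJ
      · exact Finset.mem_union_right _ hiS
      · exact Finset.mem_union_left _ hxJ
    have hinc : rkJ K Cd J + 1 ≤ rkJ K Cd (J ∪ S) := le_trans hstep (rk_mono Cd hins)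
    set Snew : Finset (Fin n) := S \ J with hSnewdef
    have hSnewS : Snew ⊆ S := Finset.sdiff_subset
    have hunion : J ∪ Snew = J ∪ S := Finset.union_sdiff_self_eq_union
    have hdisj : Disjoint J Snew := Finset.disjoint_sdiff
    have hcardU : (J ∪ S).card = J.card + Snew.card := by
      rw [← hunion, Finset.card_union_of_disjoint hdisj]
    obtain ⟨D, hDsub, hDcard⟩ :=
      Finset.exists_subset_card_eq (min_le_right (δ - 1) Snew.card)
    have hDle : D.card ≤ δ - 1 := by
      rw [hDcard]; exact min_le_left _ _
    have hdel : rkJ K Cd (J ∪ S) = rkJ K Cd ((J ∪ S) \ D) := by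
      apply rk_del Cd S D (J ∪ S) (subset_trans hDsub hSnewS) Finset.subset_union_right
        (by omega) hLP'
    have hSnewbig : δ - 1 < Snew.card := by
      by_contra hcon
      push_neg at hcon
      have hDeq : D = Snew := by
        apply Finset.eq_of_subset_of_card_le hDsub
        rw [hDcard]
        exact le_of_eq (min_eq_right hcon).symm
      have hJonly : (J ∪ S) \ D = J := by
        rw [hDeq]
        ext x
        simp only [Finset.mem_sdiff, Finset.mem_union, hSnewdef]
        constructor
        · rintro ⟨h1 | h2, h3⟩
          · exact h1
          · by_contra h4; exact h3 ⟨h2, h4⟩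
        · intro h1; exact ⟨Or.inl h1, fun h => h.2 h1⟩
      rw [hJonly] at hdel
      omega
    have hDcard' : D.card = δ - 1 := by
      rw [hDcard, min_eq_left (by omega)]
    have hsplit2 : (J ∪ S) \ D = J ∪ (Snew \ D) := by
      ext x
      simp only [Finset.mem_sdiff, Finset.mem_union, hSnewdef]
      constructor
      · rintro ⟨h1 | h2, h3⟩
        · exact Or.inl h1
        · by_cases h4 : x ∈ J
          · exact Or.inl h4
          · exact Or.inr ⟨⟨h2, h4⟩, h3⟩
      · rintro (h1 | ⟨⟨h2, h3⟩, h4⟩)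
        · refine ⟨Or.inl h1, ?_⟩
          intro hD
          exact (Finset.mem_sdiff.mp (hDsub hD)).2 h1
        · exact ⟨Or.inr h2, h4⟩
    have hrkdel : rkJ K Cd (J ∪ S) ≤ rkJ K Cd J + (Snew \ D).card := by
      rw [hdel, hsplit2]
      exact le_trans (rk_split Cd J (Snew \ D)) (by
        have := rk_card Cd (Snew \ D); omega)
    have hcardSD : (Snew \ D).card = Snew.card - (δ - 1) := by
      rw [Finset.card_sdiff_of_subset hDsub, hDcard']
    -- rank of S is at most r
    have hrkS : rkJ K Cd S ≤ r := by
      obtain ⟨D', hD'sub, hD'card⟩ :=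
        Finset.exists_subset_card_eq (min_le_right (δ - 1) S.card)
      have hD'le : D'.card ≤ δ - 1 := by
        rw [hD'card]; exact min_le_left _ _
      have hdel' : rkJ K Cd S = rkJ K Cd (S \ D') :=
        rk_del Cd S D' S hD'sub (le_refl _) (by omega) hLP'
      rcases Nat.lt_or_ge S.card (δ - 1) with hslt | hsge
      · have : D' = S := Finset.eq_of_subset_of_card_le hD'sub
          (by rw [hD'card]; exact le_of_eq (min_eq_right (by omega)).symm)
        rw [hdel', this, Finset.sdiff_self]
        rw [rk_empty]
        omega
      · have h1 := rk_card Cd (S \ D')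
        rw [Finset.card_sdiff_of_subset hD'sub, hD'card, min_eq_left hsge] at h1
        rw [hdel']
        omega
    refine ⟨J ∪ S, ?_, ?_⟩
    · have e1 : (t+1) * r = t * r + r := by ring
      rw [e1]
      exact le_trans (rk_split Cd J S) (add_le_add hJ1 hrkS)
    · have e2 : (t+1) * (δ - 1) = t * (δ - 1) + (δ - 1) := by ring
      rw [e2, hcardU]
      generalize hX : t * (δ - 1) = X at hJ2 ⊢
      omega

lemma singleton_phase2 (Cd : Submodule K (Fin n → K)) {k Y : ℕ}
    (hk : Module.finrank K Cd = k) (hk1 : 0 < k) :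
    ∀ fuel : ℕ, ∀ J : Finset (Fin n), rkJ K Cd J ≤ k - 1 → rkJ K Cd J + Y ≤ J.card →
    k - 1 - rkJ K Cd J ≤ fuel →
    ∃ J', rkJ K Cd J' = k - 1 ∧ rkJ K Cd J' + Y ≤ J'.card := by
  intro fuel
  induction fuel with
  | zero =>
    intro J h1 h2 h3
    exact ⟨J, by omega, h2⟩
  | succ fuel ih =>
    intro J h1 h2 h3
    by_cases heq : rkJ K Cd J = k - 1
    · exact ⟨J, heq, h2⟩
    · have hlt : rkJ K Cd J < k - 1 := by omega
      obtain ⟨c, hc, hcne, hcvan⟩ := rk_exists_vanish Cd J (by rw [hk]; omega)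
      obtain ⟨i, hci⟩ : ∃ i, c i ≠ 0 := by
        by_contra hall; push_neg at hall; exact hcne (funext hall)
      have hiJ : i ∉ J := fun hiJ => hci (hcvan i hiJ)
      have hdn : rkJ K Cd J + 1 ≤ rkJ K Cd (insert i J) := rk_step_up Cd J i c hc hcvan hci
      have hup : rkJ K Cd (insert i J) ≤ rkJ K Cd J + 1 := by
        have hins : insert i J = J ∪ {i} := by
          ext x
          simp [Finset.mem_insert, Finset.mem_union, or_comm]
        rw [hins]
        refine le_trans (rk_split Cd J {i}) ?_
        have := rk_card Cd ({i} : Finset (Fin n))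
        simp only [Finset.card_singleton] at this
        omega
      have hcard : (insert i J).card = J.card + 1 := Finset.card_insert_of_notMem hiJ
      exact ih (insert i J) (by omega) (by omega) (by omega)

open Classical in
lemma singleton_bound (Cd : Submodule K (Fin n → K)) {r δ k sct : ℕ} (hδ2 : 2 ≤ δ)
    (hloc : HasLocality (Cd : Set (Fin n → K)) r δ)
    (hk : Module.finrank K Cd = k) (hk1 : 0 < k) (hsct : sct * r < k) :
    ∃ c, c ∈ Cd ∧ c ≠ 0 ∧ wt c + ((k - 1) + sct * (δ - 1)) ≤ n := by
  obtain ⟨J0, hJ01, hJ02⟩ := singleton_phase1 Cd hδ2 hloc hk sct hsct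
  have hJ0le : rkJ K Cd J0 ≤ k - 1 := by
    generalize hR : sct * r = R at hJ01 hsct
    omega
  obtain ⟨J, hJrk, hJinv⟩ := singleton_phase2 Cd hk hk1 k J0 hJ0le hJ02 (by omega)
  obtain ⟨c, hc, hcne, hcvan⟩ := rk_exists_vanish Cd J (by rw [hk]; omega)
  refine ⟨c, hc, hcne, ?_⟩
  have hwt : wt c = (Finset.univ.filter fun i => c i ≠ 0).card := rfl
  have hsupp : (Finset.univ.filter fun i => c i ≠ 0) ⊆ Finset.univ \ J := by
    intro j hj
    rw [Finset.mem_sdiff]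
    refine ⟨Finset.mem_univ j, ?_⟩
    intro hjJ
    exact (Finset.mem_filter.mp hj).2 (hcvan j hjJ)
  have hcard : (Finset.univ \ J).card = n - J.card := by
    rw [Finset.card_sdiff_of_subset (Finset.subset_univ J), Finset.card_univ, Fintype.card_fin]
  have h1 : wt c ≤ n - J.card := by
    rw [hwt, ← hcard]
    exact Finset.card_le_card hsupp
  have h2 : J.card ≤ n := by
    have := Finset.card_le_card (Finset.subset_univ J)
    rwa [Finset.card_univ, Fintype.card_fin] at this
  generalize hY : sct * (δ - 1) = Y at hJinv ⊢
  omega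

end Singleton

set_option linter.unusedSectionVars false
set_option maxHeartbeats 1600000
set_option synthInstance.maxHeartbeats 400000
noncomputable section
open Polynomial
open scoped Pointwise

/-- Theorem 5.1 of the paper: generic construction of optimal cyclic
`(r,δ)`-LRCs of length `n ∣ q + 1` with `δ` even; codes over `F_q` with zeros in `F_{q^2}`. -/
theorem stmt13 (K L : Type) [Field K] [Fintype K] [Field L] [Fintype L] [Algebra K L]
    (n m s b t δ : ℕ)
    (hn : 0 < n) (hm : 0 < m) (hs : 0 < s) (hδ : 2 ≤ δ) (hδeven : Even δ)
    (hdvd : n ∣ Fintype.card K + 1) (hcop : Nat.Coprime n (Fintype.card K))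
    (hcard : Fintype.card L = Fintype.card K ^ 2)
    (hb : Nat.Coprime b n) (ht : t ≤ n - 1)
    (α : L) (hα : IsPrimitiveRoot α n)
    (idx : Fin s → ℕ)
    (hlow : ∀ l : Fin s, m - 1 + δ ≤ idx l) (hupp : ∀ l : Fin s, idx l ≤ n - δ)
    (hgap : ∀ l : Fin s, ∀ hl : (l : ℕ) + 1 < s, idx l + δ ≤ idx ⟨(l : ℕ) + 1, hl⟩)
    (A B : Set L)
    (hAdef : A = {x : L | ∃ j < m, x = α ^ (t + j * b)} ∪
      {x : L | ∃ l : Fin s, x = α ^ (t + idx l * b)})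
    (hBdef : B = {x : L | ∃ e ≤ (δ - 2) / 2, x = α ^ (e * b) ∨ x = (α ^ (e * b))⁻¹})
    (hcyclo : ∀ x ∈ A * B, x ^ Fintype.card K ∈ A * B)
    (dA : ℕ)
    (hdA : IsMinDist (dualSet L n (cyclicCode L n A : Set (Fin n → L))) dA) :
    HasLocality (cyclicCodeOn K L n (A * B) : Set (Fin n → K)) (dA - δ + 1) δ ∧
    Module.finrank K (cyclicCodeOn K L n (A * B)) = n - m + 1 - (s + 1) * (δ - 1) ∧
    (ceilDiv' (n - m + 1 - (s + 1) * (δ - 1)) (dA - δ + 1) = s + 1 →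
      IsMinDist (cyclicCodeOn K L n (A * B) : Set (Fin n → K)) (m + δ - 1) ∧
      SingletonOpt n (n - m + 1 - (s + 1) * (δ - 1)) (dA - δ + 1) δ (m + δ - 1)) := by
  classical
  haveI : NeZero n := ⟨hn.ne'⟩
  set h : ℕ := (δ - 2) / 2 with hh
  have hδh : δ = 2*h + 2 := by
    obtain ⟨w, hw⟩ := hδeven
    omega
  have hδ1 : δ - 1 = 2*h + 1 := by omega
  -- step chain between consecutive indices
  have hchain : ∀ (l l' : Fin s), (l : ℕ) < (l' : ℕ) → idx l + (2*h+2) ≤ idx l' := by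
    intro l l' hll
    have hch := idx_chain hgap l'.1 l.1 l.2 l'.2 hll
    have hd : δ ≤ ((l' : ℕ) - (l : ℕ)) * δ := Nat.le_mul_of_pos_left δ (by omega)
    have hle : idx ⟨l.1, l.2⟩ + δ ≤ idx ⟨l'.1, l'.2⟩ := le_trans (by omega) hch
    simpa [hδh] using hle
  set l0 : Fin s := ⟨0, hs⟩ with hl0
  have hlow0 : m - 1 + δ ≤ idx l0 := hlow l0
  have hupp0 : idx l0 ≤ n - δ := hupp l0
  have hnδ : m - 1 + 2*δ ≤ n := by omega
  -- bound on n
  have hnbound : m - 1 + (s+1)*δ ≤ n := by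
    obtain ⟨s', rfl⟩ : ∃ s', s = s' + 1 := ⟨s - 1, by omega⟩
    rcases Nat.eq_zero_or_pos s' with rfl | hs'
    · have e1 : (0+1+1)*δ = 2*δ := by ring
      rw [e1]
      exact hnδ
    · set llast : Fin (s'+1) := ⟨s', by omega⟩ with hll
      have hupl : idx llast ≤ n - δ := hupp llast
      have hch := idx_chain hgap s' 0 (by omega) (by omega) hs'
      have hch' : idx l0 + s' * δ ≤ idx llast := by
        simpa [hl0, hll] using hch
      have hP : (s'+1+1)*δ = s'*δ + 2*δ := by ring
      rw [hP]
      have hlow0' : m - 1 + δ ≤ idx l0 := hlow0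
      generalize hX : s' * δ = X at hch' ⊢
      omega
  set D : Finset ℕ := expD m s h idx with hD
  have hDlt : ∀ x ∈ D, x < n := by
    intro x hx
    rcases Finset.mem_union.mp hx with hr | hbi
    · have := Finset.mem_range.mp hr
      omega
    · obtain ⟨l, _, hl⟩ := Finset.mem_biUnion.mp hbi
      have h1 := (Finset.mem_Ico.mp hl).2
      have h2 := hupp l
      omega
  have hlow' : ∀ l : Fin s, m + 2*h + 1 ≤ idx l := by
    intro l
    have := hlow l
    omega
  have hcardD : D.card = m + 2*h + s*(2*h+1) := expD_card hlow' hchain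
  have hABeq : A * B = rootPow α '' (fexp n b t h '' ↑D) :=
    AB_eq hα hm hδh A B hAdef hBdef
  set ABf : Finset L := (D.image (fexp n b t h)).image (rootPow α) with hABfdef
  have hABf : A * B = ↑ABf := by
    rw [hABeq, hABfdef, Finset.coe_image, Finset.coe_image]
  have hmemAB : ∀ x : L, x ∈ A * B ↔ x ∈ ABf := by
    intro x
    rw [hABf]
    exact Finset.mem_coe.symm.symm
  set z : ℕ := m + 2*h + s*(2*h+1) with hz
  have hzcard : ABf.card = z := by
    rw [hABfdef, Finset.card_image_of_injOn ((rootPow_inj hα).injOn),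
      Finset.card_image_of_injOn (fexp_injOn hb hDlt), hcardD]
  have hzeq : z = m - 1 + (s+1)*(δ-1) := by
    have e : (s+1)*(δ-1) = s*(2*h+1) + (2*h+1) := by rw [hδ1]; ring
    rw [hz, e]
    generalize s*(2*h+1) = P
    omega
  have hzn : z + s + 1 ≤ n := by
    have e2 : (s+1)*δ = (s+1)*(δ-1) + (s+1) := by
      have : δ = (δ-1) + 1 := by omega
      rw [this]
      have : (δ - 1 + 1 - 1) = δ - 1 := by omega
      rw [this]
      ring
    rw [hzeq]
    generalize hQ : (s+1)*(δ-1) = Q at e2 ⊢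
    generalize hR : (s+1)*δ = R at e2 hnbound
    omega
  have hkval : n - z = n - m + 1 - (s + 1) * (δ - 1) := by
    rw [hzeq]
    generalize (s+1)*(δ-1) = Q at hzn ⊢
    rw [hzeq] at hzn
    omega
  -- locality
  obtain ⟨⟨u, hu, hune, hwtu⟩, -⟩ := hdA
  have hLoc : HasLocality (cyclicCodeOn K L n (A * B) : Set (Fin n → K)) (dA - δ + 1) δ :=
    locality_main hα hb hm hδh A B hAdef hBdef u hu hune hwtu
  -- dimension
  have hclosed : ∀ β ∈ ABf, β ^ (Fintype.card K) ∈ ABf := by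
    intro β hβ
    exact (hmemAB _).mp (hcyclo β ((hmemAB β).mpr hβ))
  obtain ⟨gK, hgKmonic, hgKmap⟩ := descent ABf hclosed
  have hgLdeg : (∏ β ∈ ABf, (X - C β)).natDegree = z := by
    rw [Polynomial.natDegree_prod_of_monic _ _ (fun β _ => monic_X_sub_C β)]
    rw [← hzcard]
    simp [Polynomial.natDegree_X_sub_C]
  have hgKdeg : gK.natDegree = z := by
    have := hgKmonic.natDegree_map (algebraMap K L)
    rw [hgKmap, hgLdeg] at this
    exact this.symm
  have hmemiff : ∀ c : Fin n → K,
      c ∈ cyclicCodeOn K L n (A * B) ↔ gK ∣ vecPoly c := by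
    intro c
    have hcode : c ∈ cyclicCodeOn K L n (A * B) ↔
        ∀ β ∈ A * B, ∑ i : Fin n, algebraMap K L (c i) * β ^ (i : ℕ) = 0 := Iff.rfl
    rw [hcode]
    constructor
    · intro hc
      have hev : ∀ β ∈ ABf, ((vecPoly c).map (algebraMap K L)).eval β = 0 := by
        intro β hβ
        rw [eval_map_vecPoly]
        exact hc β ((hmemAB β).mpr hβ)
      have hdvd := (prod_X_sub_C_dvd_iff ABf _).mpr hev
      rw [← hgKmap] at hdvd
      exact (Polynomial.map_dvd_map' (algebraMap K L)).mp hdvd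
    · intro hdvd β hβ
      have hdvd2 : gK.map (algebraMap K L) ∣ (vecPoly c).map (algebraMap K L) :=
        (Polynomial.map_dvd_map' (algebraMap K L)).mpr hdvd
      rw [hgKmap] at hdvd2
      have hev := (prod_X_sub_C_dvd_iff ABf _).mp hdvd2 β ((hmemAB β).mp hβ)
      rw [eval_map_vecPoly] at hev
      exact hev
  have hfinrank : Module.finrank K (cyclicCodeOn K L n (A * B)) = n - z :=
    code_finrank hn (by omega) gK hgKmonic hgKdeg _ hmemiff
  have hfinrank' : Module.finrank K (cyclicCodeOn K L n (A * B))
      = n - m + 1 - (s + 1) * (δ - 1) := by rw [hfinrank, hkval]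
  refine ⟨hLoc, hfinrank', ?_⟩
  intro Hceil
  -- lower bound on weights (BCH)
  have hlower : ∀ c : Fin n → K, c ∈ cyclicCodeOn K L n (A * B) → c ≠ 0 →
      m + δ - 1 ≤ wt c := by
    intro c hc hcne
    have hvan : ∀ x ∈ Finset.range (m + 2*h), ∑ i : Fin n,
        algebraMap K L (c i) * (rootPow α (fexp n b t h x)) ^ (i : ℕ) = 0 := by
      intro x hx
      apply hc
      rw [hABeq]
      exact ⟨fexp n b t h x, ⟨x, Finset.mem_coe.mpr (mem_expD_left (Finset.mem_range.mp hx)), rfl⟩, rfl⟩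
    have := bch_bound hα hb c hcne hvan
    omega
  -- Singleton bound gives a codeword of low weight
  set r : ℕ := dA - δ + 1 with hrdef
  have hr1 : 1 ≤ r := by omega
  have hkpos : 0 < n - z := by omega
  have hsrk : s * r < n - z := by
    have hceil : (n - m + 1 - (s + 1) * (δ - 1) + r - 1) / r = s + 1 := Hceil
    rw [← hkval] at hceil
    have hle : (s+1) * r ≤ n - z + r - 1 := by
      rw [← hceil]
      exact Nat.div_mul_le_self _ r
    have e3 : (s+1) * r = s * r + r := by ring
    rw [e3] at hle
    generalize s * r = R at hle ⊢
    omega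
  obtain ⟨c, hc, hcne, hwtb⟩ := singleton_bound (cyclicCodeOn K L n (A * B)) hδ hLoc
    hfinrank hkpos hsrk
  have hupper : wt c ≤ m + δ - 1 := by
    have e4 : (s+1)*(δ-1) = s*(δ-1) + (δ-1) := by ring
    rw [hzeq] at hzn hwtb hkpos
    generalize hX : s * (δ-1) = X at hwtb e4
    generalize hQ : (s+1)*(δ-1) = Q at hzn hwtb hkpos e4
    omega
  have hwteq : wt c = m + δ - 1 :=
    le_antisymm hupper (hlower c hc hcne)
  constructor
  · exact ⟨⟨c, SetLike.mem_coe.mpr hc, hcne, hwteq⟩,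
      fun c' hc' hcne' => hlower c' (SetLike.mem_coe.mp hc') hcne'⟩
  · show m + δ - 1 = n - (n - m + 1 - (s + 1) * (δ - 1))
      - (ceilDiv' (n - m + 1 - (s + 1) * (δ - 1)) (dA - δ + 1) - 1) * (δ - 1) + 1
    rw [Hceil, ← hkval]
    have e5 : (s + 1 - 1) * (δ - 1) = s * (δ - 1) := by
      have : s + 1 - 1 = s := by omega
      rw [this]
    rw [e5]
    rw [hzeq] at hzn ⊢
    have e4 : (s+1)*(δ-1) = s*(δ-1) + (δ-1) := by ring
    generalize hX : s * (δ-1) = X at e4 ⊢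
    generalize hQ : (s+1)*(δ-1) = Q at hzn e4 ⊢
    omega
end
end
end
end
end
end
end
end
end
end
end
end

section
/- Let A, B ⊆ R_n be complete defining sets of cyclic codes C_A and C_B of length n over F_q (i.e., their exponent sets are unions of q-cyclotomic cosets mod n), and suppose d_A⊥ > d_B, where d_A⊥ is the minimum distance of the dual of C_A and d_B is the minimum distance of C_B. Then the cyclic code C_{AB} of length n over F_q with complete defining set AB = {ab : a ∈ A, b ∈ B} has (d_A⊥ - d_B + 1, d_B)-locality. -/
noncomputable section

open Polynomial
open scoped Pointwise

/-!
If `w` is a dual codeword of `C_A` and `e` a codeword of `C_{AB}`, the componentwise product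
`w * e` lies in `C_B`. Indeed, by Fourier inversion at the powers of `α`,
`n · ∑ⱼ wⱼ eⱼ βʲ = ∑ₖ E(αᵏ) · W(β α⁻ᵏ)` for `β ∈ B`, and every term vanishes: either `αᵏ ∈ AB`,
or `γ = αᵏ β⁻¹` is a root of unity outside `A`, and then `W(γ⁻¹) = 0`. The latter holds because
`j ↦ Tr(λ γ⁻ʲ)` (trace from `K(γ)` to `K`) is a codeword of `C_A` for every `λ`, so
`Tr(λ W(γ⁻¹)) = 0` for all `λ`, and the trace form is nondegenerate.

The recovery set of a coordinate `i` is then the support `S` of a minimum-weight dual codeword `w`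
of `C_A`, cyclically shifted so that `i ∈ S`: two codewords `c ≠ c'` of `C_{AB}` differing on `S`
give the nonzero codeword `w * (c - c')` of `C_B`, supported in `S ∩ {c ≠ c'}`, which therefore
has at least `d_B` elements.
-/

open Finset

lemma geom_sum_eq_zero_of_pow_eq_one {L : Type*} [DivisionRing L] {μ : L} {n : ℕ} (hμn : μ ^ n = 1)
    (hμ : μ ≠ 1) : ∑ k ∈ range n, μ ^ k = 0 := by
  rw [geom_sum_eq hμ, hμn, sub_self, zero_div]

lemma ne_zero_of_pow_eq_one {M : Type*} [MonoidWithZero M] [Nontrivial M] {x : M} {n : ℕ}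
    [NeZero n] (h : x ^ n = 1) : x ≠ 0 := by
  rintro rfl
  exact zero_ne_one ((zero_pow (NeZero.ne n)).symm.trans h)

namespace IsPrimitiveRoot

variable {L : Type*} [Field L] {α : L} {n : ℕ}

lemma sum_range_pow_mul_inv_pow (hα : IsPrimitiveRoot α n) (i j : Fin n) :
    ∑ k ∈ range n, (α ^ (i : ℕ) * (α ^ (j : ℕ))⁻¹) ^ k = if i = j then (n : L) else 0 := by
  have hα0 : α ≠ 0 := hα.ne_zero (Fin.pos i).ne'
  split_ifs with hij
  · simp [hij, pow_ne_zero _ hα0]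
  · refine geom_sum_eq_zero_of_pow_eq_one ?_ ?_
    · rw [mul_pow, inv_pow, pow_right_comm, hα.pow_eq_one, pow_right_comm, hα.pow_eq_one]
      simp
    · rw [Ne, mul_inv_eq_one₀ (pow_ne_zero _ hα0)]
      exact fun h => hij (Fin.ext (hα.pow_inj i.isLt j.isLt h))

lemma sum_range_eval_mul_eval_inv (hα : IsPrimitiveRoot α n) (u v : Fin n → L) :
    ∑ k ∈ range n,
        (∑ i : Fin n, u i * (α ^ k) ^ (i : ℕ)) * ∑ j : Fin n, v j * ((α ^ k)⁻¹) ^ (j : ℕ) =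
      n * ∑ j : Fin n, u j * v j := by
  have hkernel : ∀ (k : ℕ) (i j : Fin n),
      u i * (α ^ k) ^ (i : ℕ) * (v j * ((α ^ k)⁻¹) ^ (j : ℕ)) =
        u i * v j * (α ^ (i : ℕ) * (α ^ (j : ℕ))⁻¹) ^ k := by
    intro k i j; ring
  calc _ = ∑ i : Fin n, ∑ j : Fin n,
        u i * v j * ∑ k ∈ range n, (α ^ (i : ℕ) * (α ^ (j : ℕ))⁻¹) ^ k := by
        simp_rw [sum_mul_sum, hkernel, mul_sum]
        rw [sum_comm]
        exact sum_congr rfl fun i _ => sum_comm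
    _ = n * ∑ j : Fin n, u j * v j := by
        simp [hα.sum_range_pow_mul_inv_pow, mul_sum, mul_comm]

end IsPrimitiveRoot

def IsShiftInvariant {F : Type} {n : ℕ} (C : Set (Fin n → F)) : Prop :=
  ∀ c ∈ C, ∀ t : Fin n, (fun j => c (j + t)) ∈ C

section Shift

variable {F : Type} {n : ℕ} [NeZero n]

lemma IsShiftInvariant.dualSet [Field F] {C : Set (Fin n → F)} (hC : IsShiftInvariant C) :
    IsShiftInvariant (dualSet F n C) := by
  intro v hv t c hc
  rw [← hv _ (hC c hc (-t))]
  exact Fintype.sum_equiv (Equiv.addRight t) _ _ fun j => by simp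

lemma wt_shift [Zero F] (v : Fin n → F) (t : Fin n) : wt (fun j => v (j + t)) = wt v := by
  unfold wt
  exact Finset.card_equiv (Equiv.addRight t) (by simp)

lemma IsShiftInvariant.exists_apply_ne_zero_wt_eq [Zero F] {C : Set (Fin n → F)}
    (hC : IsShiftInvariant C) {v : Fin n → F} (hv : v ∈ C) (hv0 : v ≠ 0) (i : Fin n) :
    ∃ w ∈ C, w i ≠ 0 ∧ wt w = wt v := by
  obtain ⟨j, hj⟩ := Function.ne_iff.1 hv0
  exact ⟨fun k => v (k + (j - i)), hC v hv _, by simpa using hj, wt_shift v _⟩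

lemma isShiftInvariant_cyclicCodeOn {K L : Type} [Field K] [Field L] [Algebra K L] {Z : Set L}
    (hZ : Z ⊆ {x : L | x ^ n = 1}) :
    IsShiftInvariant (cyclicCodeOn K L n Z : Set (Fin n → K)) := by
  intro c hc t β hβ
  have hβn : β ^ n = 1 := hZ hβ
  refine (mul_eq_zero.1 ?_).resolve_left (pow_ne_zero (t : ℕ) (ne_zero_of_pow_eq_one hβn))
  rw [← hc β hβ, mul_sum]
  refine Fintype.sum_equiv (Equiv.addRight t) _ _ fun j => ?_
  rw [Equiv.coe_addRight, Fin.val_add, ← pow_eq_pow_mod _ hβn, pow_add]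
  ring

end Shift

lemma hasLocality_of_mul_mem {F : Type} [Ring F] [NoZeroDivisors F] {n : ℕ}
    {C : Submodule F (Fin n → F)} {D W : Set (Fin n → F)} {r δ : ℕ}
    (hW : ∀ i, ∃ w ∈ W, w i ≠ 0 ∧ wt w ≤ r + δ - 1)
    (hmul : ∀ w ∈ W, ∀ e ∈ C, w * e ∈ D) (hD : ∀ u ∈ D, u ≠ 0 → δ ≤ wt u) :
    HasLocality (C : Set (Fin n → F)) r δ := by
  classical
  intro i
  obtain ⟨w, hwW, hwi, hwt⟩ := hW i
  refine ⟨univ.filter (w · ≠ 0), by simpa using hwi, by unfold wt at hwt; convert hwt, ?_⟩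
  rintro c hc c' hc' ⟨j, hjS, hj⟩
  have hu : w * (c - c') ∈ D := hmul w hwW _ (C.sub_mem hc hc')
  have huj : (w * (c - c')) j ≠ 0 := mul_ne_zero (by simpa using hjS) (sub_ne_zero.2 hj)
  calc δ ≤ wt (w * (c - c')) := hD _ hu fun h => huj (by rw [h, Pi.zero_apply])
    _ ≤ _ := by
      unfold wt
      refine card_le_card fun k hk => ?_
      simp only [mem_filter, mem_univ, true_and, Pi.mul_apply, Pi.sub_apply, ne_eq,
        mul_eq_zero, sub_eq_zero, not_or] at hk ⊢
      exact hk

lemma pow_pow_mem {M : Type*} [Monoid M] {A : Set M} {q : ℕ} (hA : ∀ x ∈ A, x ^ q ∈ A)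
    {x : M} (hx : x ∈ A) (m : ℕ) : x ^ q ^ m ∈ A := by
  induction m with
  | zero => simpa using hx
  | succ m ih => simpa [pow_succ, pow_mul] using hA _ ih

section Trace

variable {K F L : Type} [Field K] [Fintype K] [Field F] [Fintype F] [Field L]
  [Algebra K F] [Algebra F L] [Algebra K L] [IsScalarTower K F L]
  {n : ℕ} {A : Set L}

lemma trace_mem_cyclicCodeOn (hAsub : A ⊆ {x : L | x ^ n = 1})
    (hA : ∀ x ∈ A, x ^ Fintype.card K ∈ A) {γ : F} (hγn : γ ^ n = 1)
    (hγA : algebraMap F L γ ∉ A) (l : F) :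
    (fun j : Fin n => Algebra.trace K F (l * γ⁻¹ ^ (j : ℕ))) ∈ cyclicCodeOn K L n A := by
  intro β hβ
  set q := Fintype.card K
  set s := Module.finrank K F
  have hconj : ∀ t < s, algebraMap F L γ ^ q ^ t ≠ β := by
    intro t ht h
    have hγ : γ ^ q ^ s = γ := by
      rw [← Module.card_eq_pow_finrank]
      exact FiniteField.pow_card γ
    have : algebraMap F L γ = β ^ q ^ (s - t) := by
      rw [← h, ← pow_mul, ← pow_add, Nat.add_sub_cancel' ht.le, ← map_pow, hγ]
    exact hγA (this ▸ pow_pow_mem hA hβ _)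
  show ∑ j : Fin n,
    algebraMap K L (Algebra.trace K F (l * γ⁻¹ ^ (j : ℕ))) * β ^ (j : ℕ) = 0
  simp_rw [IsScalarTower.algebraMap_apply K F L, FiniteField.algebraMap_trace_eq_sum_pow,
    Nat.card_eq_fintype_card, map_sum, sum_mul]
  rw [sum_comm]
  refine sum_eq_zero fun t ht => ?_
  calc ∑ j : Fin n, algebraMap F L ((l * γ⁻¹ ^ (j : ℕ)) ^ q ^ t) * β ^ (j : ℕ)
      = algebraMap F L l ^ q ^ t * ∑ k ∈ range n, ((algebraMap F L γ ^ q ^ t)⁻¹ * β) ^ k := by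
        rw [Fin.sum_univ_eq_sum_range (fun k => algebraMap F L ((l * γ⁻¹ ^ k) ^ q ^ t) * β ^ k),
          mul_sum]
        refine sum_congr rfl fun k _ => ?_
        simp only [map_pow, map_mul, map_inv₀]
        ring
    _ = 0 := by
        rw [geom_sum_eq_zero_of_pow_eq_one, mul_zero]
        · rw [mul_pow, inv_pow, ← pow_mul, mul_comm (q ^ t), pow_mul, ← map_pow, hγn, map_one,
            one_pow, inv_one, one_mul, hAsub hβ]
        · intro h
          have hx : algebraMap F L γ ^ q ^ t ≠ 0 := fun hx => by simp [hx] at h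
          exact hconj t (mem_range.1 ht) ((inv_mul_eq_one₀ hx).1 h)

lemma sum_algebraMap_mul_inv_pow_eq_zero_of_fintype (hAsub : A ⊆ {x : L | x ^ n = 1})
    (hA : ∀ x ∈ A, x ^ Fintype.card K ∈ A) {w : Fin n → K}
    (hw : w ∈ dualSet K n (cyclicCodeOn K L n A : Set (Fin n → K))) {γ : F} (hγn : γ ^ n = 1)
    (hγA : algebraMap F L γ ∉ A) :
    ∑ j : Fin n, algebraMap K F (w j) * γ⁻¹ ^ (j : ℕ) = 0 := by
  set z := ∑ j : Fin n, algebraMap K F (w j) * γ⁻¹ ^ (j : ℕ)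
  by_contra hz
  obtain ⟨μ, hμ⟩ := Algebra.trace_surjective K F 1
  have h := hw _ (trace_mem_cyclicCodeOn hAsub hA hγn hγA (μ / z))
  have : ∑ j : Fin n, w j * Algebra.trace K F (μ / z * γ⁻¹ ^ (j : ℕ))
      = Algebra.trace K F (μ / z * z) := by
    simp_rw [← smul_eq_mul (a := w _), ← map_smul, ← map_sum, z, mul_sum, Algebra.smul_def]
    exact congrArg _ (sum_congr rfl fun j _ => by ring)
  rw [h, div_mul_cancel₀ μ hz, hμ] at this
  exact zero_ne_one this

end Trace

open IntermediateField in
lemma sum_algebraMap_mul_inv_pow_eq_zero_of_mem_dualSet {K L : Type} [Field K] [Fintype K]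
    [Field L] [Algebra K L] {n : ℕ} [NeZero n] {A : Set L} (hAsub : A ⊆ {x : L | x ^ n = 1})
    (hA : ∀ x ∈ A, x ^ Fintype.card K ∈ A) {w : Fin n → K}
    (hw : w ∈ dualSet K n (cyclicCodeOn K L n A : Set (Fin n → K))) {γ : L} (hγn : γ ^ n = 1)
    (hγA : γ ∉ A) :
    ∑ j : Fin n, algebraMap K L (w j) * γ⁻¹ ^ (j : ℕ) = 0 := by
  have hγ : IsIntegral K γ := .of_pow (NeZero.pos n) (hγn ▸ isIntegral_one)
  have := adjoin.finiteDimensional hγ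
  have := Module.finite_of_finite K (M := K⟮γ⟯)
  let := Fintype.ofFinite K⟮γ⟯
  have h := sum_algebraMap_mul_inv_pow_eq_zero_of_fintype (F := K⟮γ⟯) hAsub hA hw
    (γ := AdjoinSimple.gen K γ) (Subtype.ext (by simpa using hγn)) (by simpa using hγA)
  simpa using congrArg (algebraMap K⟮γ⟯ L) h

lemma mul_mem_cyclicCodeOn_of_mem_dualSet {K L : Type} [Field K] [Fintype K] [Field L]
    [Algebra K L] {n : ℕ} [NeZero n] {α : L} (hα : IsPrimitiveRoot α n) {A B : Set L}
    (hAsub : A ⊆ {x : L | x ^ n = 1}) (hBsub : B ⊆ {x : L | x ^ n = 1})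
    (hA : ∀ x ∈ A, x ^ Fintype.card K ∈ A) {w e : Fin n → K}
    (hw : w ∈ dualSet K n (cyclicCodeOn K L n A : Set (Fin n → K)))
    (he : e ∈ cyclicCodeOn K L n (A * B)) :
    w * e ∈ cyclicCodeOn K L n B := by
  intro β hβ
  have hβn : β ^ n = 1 := hBsub hβ
  have hβ0 : β ≠ 0 := ne_zero_of_pow_eq_one hβn
  have hterm : ∀ k ∈ range n, (∑ i : Fin n, algebraMap K L (e i) * (α ^ k) ^ (i : ℕ)) *
      ∑ j : Fin n, algebraMap K L (w j) * β ^ (j : ℕ) * ((α ^ k)⁻¹) ^ (j : ℕ) = 0 := by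
    intro k _
    by_cases hk : α ^ k ∈ A * B
    · rw [he _ hk, zero_mul]
    · have hγA : α ^ k * β⁻¹ ∉ A := fun h => hk (by simpa [hβ0] using Set.mul_mem_mul h hβ)
      have hγn : (α ^ k * β⁻¹) ^ n = 1 := by
        rw [mul_pow, pow_right_comm, hα.pow_eq_one, inv_pow, hβn]; simp
      rw [← mul_zero (∑ i : Fin n, _),
        ← sum_algebraMap_mul_inv_pow_eq_zero_of_mem_dualSet hAsub hA hw hγn hγA]
      refine congrArg _ (sum_congr rfl fun j _ => ?_)
      rw [mul_inv, inv_inv]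
      ring
  have h := hα.sum_range_eval_mul_eval_inv (fun i => algebraMap K L (e i))
    (fun j => algebraMap K L (w j) * β ^ (j : ℕ))
  have := hα.neZero'
  rw [sum_eq_zero hterm, eq_comm, mul_eq_zero] at h
  simpa [mul_comm, mul_left_comm, NeZero.ne (n : L)] using h

theorem stmt19_general (K L : Type) [Field K] [Fintype K] [Field L] [Algebra K L]
    (n : ℕ) (hn : 0 < n)
    (α : L) (hα : IsPrimitiveRoot α n)
    (A B : Set L) (hAsub : A ⊆ {x : L | x ^ n = 1}) (hBsub : B ⊆ {x : L | x ^ n = 1})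
    (hA : ∀ x ∈ A, x ^ Fintype.card K ∈ A)
    (dA dB : ℕ)
    (hdA : IsMinDist (dualSet K n (cyclicCodeOn K L n A : Set (Fin n → K))) dA)
    (hdB : IsMinDist (cyclicCodeOn K L n B : Set (Fin n → K)) dB) :
    HasLocality (cyclicCodeOn K L n (A * B) : Set (Fin n → K)) (dA - dB + 1) dB := by
  have : NeZero n := ⟨hn.ne'⟩
  obtain ⟨v, hv, hv0, hvwt⟩ := hdA.1
  refine hasLocality_of_mul_mem (fun i => ?_)
    (fun w hw e he => mul_mem_cyclicCodeOn_of_mem_dualSet hα hAsub hBsub hA hw he) hdB.2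
  obtain ⟨w, hw, hwi, hwt⟩ :=
    (isShiftInvariant_cyclicCodeOn hAsub).dualSet.exists_apply_ne_zero_wt_eq hv hv0 i
  exact ⟨w, hw, hwi, by omega⟩

/-- Corollary 3.5 of the paper: if `d_A⊥ > d_B` for the cyclic codes over
`F_q` with complete defining sets `A` and `B`, then the cyclic code over `F_q` with
complete defining set `AB` has `(d_A⊥ - d_B + 1, d_B)`-locality. -/
theorem stmt19 (K L : Type) [Field K] [Fintype K] [Field L] [Algebra K L]
    (n : ℕ) (hn : 0 < n) (hcop : Nat.Coprime n (Fintype.card K))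
    (α : L) (hα : IsPrimitiveRoot α n)
    (A B : Set L) (hAsub : A ⊆ {x : L | x ^ n = 1}) (hBsub : B ⊆ {x : L | x ^ n = 1})
    (hA : ∀ x ∈ A, x ^ Fintype.card K ∈ A)
    (hB : ∀ x ∈ B, x ^ Fintype.card K ∈ B)
    (dA dB : ℕ)
    (hdA : IsMinDist (dualSet K n (cyclicCodeOn K L n A : Set (Fin n → K))) dA)
    (hdB : IsMinDist (cyclicCodeOn K L n B : Set (Fin n → K)) dB)
    (hgt : dB < dA) :
    HasLocality (cyclicCodeOn K L n (A * B) : Set (Fin n → K)) (dA - dB + 1) dB :=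
  stmt19_general K L n hn α hα A B hAsub hBsub hA dA dB hdA hdB
end
end
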